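/- arXiv:2110.01276 — 8 statements merged into one kernel-verified Lean document; each statement's English description precedes it below -/
import Mathlib

section
/- Let W ⊆ C^ω be a winning condition and M, M' two skeletons over the color set C. If W is M-cycle-consistent, then W is (M ⊗ M')-cycle-consistent, where M ⊗ M' is the direct product skeleton. -/
/-- Concatenation of a finite word with an infinite word. -/
def app {C : Type*} : List C → (ℕ → C) → (ℕ → C)
  | [], w' => w'
  | c :: u, w' => fun i =>
    match i with
    | 0 => c
    | j + 1 => app u w' j

/-- Extension of the update function of a skeleton to finite words. -/
def updStar {C M : Type*} (upd : M → C → M) (m : M) (w : List C) : M :=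
  w.foldl upd m

/-- The infinite word `γ^ω` obtained by repeating a (nonempty) finite word forever. -/
def periodic {C : Type*} [Inhabited C] (γ : List C) : ℕ → C :=
  fun i => γ.getD (i % γ.length) default

/-- The infinite word obtained by concatenating the (nonempty) finite words
`ws 0, ws 1, ws 2, …`. -/
def concatSeq {C : Type*} [Inhabited C] (ws : ℕ → List C) : ℕ → C :=
  fun i => (((List.range (i + 1)).map ws).flatten).getD i default

/-- `W` is `M`-prefix-independent: any two finite words reaching the same state of the
skeleton from the initial state have the same winning continuations. -/
def PrefIndep {C M : Type*} (upd : M → C → M) (init : M) (W : Set (ℕ → C)) : Prop :=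
  ∀ w₁ w₂ : List C, updStar upd init w₁ = updStar upd init w₂ →
    ∀ w' : ℕ → C, (app w₁ w' ∈ W ↔ app w₂ w' ∈ W)

/-- `W` is `M`-cycle-consistent: after any finite word `w`, any infinite concatenation of
winning (resp. losing) cycles on the state reached by `w` yields a winning (resp. losing)
continuation of `w`. -/
def CycleConsistent {C M : Type*} [Inhabited C] (upd : M → C → M) (init : M)
    (W : Set (ℕ → C)) : Prop :=
  ∀ w : List C, ∀ ws : ℕ → List C,
    (∀ k, ws k ≠ [] ∧ updStar upd (updStar upd init w) (ws k) = updStar upd init w) →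
    ((∀ k, app w (periodic (ws k)) ∈ W) → app w (concatSeq ws) ∈ W) ∧
    ((∀ k, app w (periodic (ws k)) ∉ W) → app w (concatSeq ws) ∉ W)

theorem updStar_map {C M N : Type*} {upd : M → C → M} {updN : N → C → N} {f : N → M}
    (hf : ∀ n c, f (updN n c) = upd (f n) c) (n : N) (w : List C) :
    f (updStar updN n w) = updStar upd (f n) w :=
  (List.foldl_hom f (fun n c => (hf n c).symm)).symm

/-- Cycle consistency pulls back along skeleton morphisms, since these map cycles to cycles. -/
theorem CycleConsistent.of_map {C M N : Type*} [Inhabited C] {upd : M → C → M} {init : M}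
    {updN : N → C → N} {initN : N} {W : Set (ℕ → C)} (f : N → M)
    (hf : ∀ n c, f (updN n c) = upd (f n) c) (hinit : f initN = init)
    (h : CycleConsistent upd init W) : CycleConsistent updN initN W := by
  intro w ws hws
  refine h w ws fun k => ⟨(hws k).1, ?_⟩
  have hcycle := congrArg f (hws k).2
  rwa [updStar_map hf, updStar_map hf, hinit] at hcycle

theorem stmt1_general {C M M' : Type*} [Inhabited C]
    (upd : M → C → M) (init : M) (upd' : M' → C → M') (init' : M')
    (W : Set (ℕ → C)) (h : CycleConsistent upd init W) :
    CycleConsistent (fun (mm : M × M') (c : C) => (upd mm.1 c, upd' mm.2 c))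
      (init, init') W :=
  h.of_map Prod.fst (fun _ _ => rfl) rfl

/-- If `W` is `M`-cycle-consistent, then `W` is `(M ⊗ M')`-cycle-consistent
for any skeleton `M'`, where the product skeleton updates componentwise. -/
theorem stmt1 {C M M' : Type*} [Inhabited C] [Finite M] [Finite M']
    (upd : M → C → M) (init : M) (upd' : M' → C → M') (init' : M')
    (W : Set (ℕ → C)) (h : CycleConsistent upd init W) :
    CycleConsistent (fun (mm : M × M') (c : C) => (upd mm.1 c, upd' mm.2 c))
      (init, init') W :=
  stmt1_general upd init upd' init' W h
end

section
/- Let (M, p) be a deterministic parity automaton over colors C, with p : M × C → {0,…,n} assigning priorities to transitions, and let W be the language it recognizes (infinite words whose run has even limsup of priorities). Then W is M-prefix-independent and M-cycle-consistent. -/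
open Filter List

section Words

variable {C : Type*}

theorem app_length_add (u : List C) (w : ℕ → C) (j : ℕ) : app u w (u.length + j) = w j := by
  induction u with
  | nil => simp [app]
  | cons c u ih => rw [length_cons, Nat.add_right_comm]; exact ih

theorem app_of_lt (u : List C) (w : ℕ → C) {i : ℕ} (h : i < u.length) : app u w i = u[i] := by
  induction u generalizing i with
  | nil => simp at h
  | cons c u ih =>
    cases i with
    | zero => rfl
    | succ i => exact ih (Nat.lt_of_succ_lt_succ h)

theorem app_of_le (u : List C) (w : ℕ → C) {i : ℕ} (h : u.length ≤ i) :
    app u w i = w (i - u.length) := by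
  obtain ⟨j, rfl⟩ := Nat.exists_eq_add_of_le h
  rw [app_length_add, Nat.add_sub_cancel_left]

theorem app_append (u v : List C) (w : ℕ → C) : app (u ++ v) w = app u (app v w) := by
  induction u with
  | nil => rfl
  | cons c u ih => funext i; cases i <;> simp only [cons_append, app, ih]

theorem limsup_app {α : Type*} [ConditionallyCompleteLattice α] (u : List α) (w : ℕ → α) :
    limsup (app u w) atTop = limsup w atTop := by
  rw [← limsup_nat_add _ u.length]
  simp only [Nat.add_comm _ u.length, app_length_add]

theorem flatten_map_range_prefix (ws : ℕ → List C) {k k' : ℕ} (h : k ≤ k') :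
    ((range k).map ws).flatten <+: ((range k').map ws).flatten := by
  obtain ⟨d, rfl⟩ := Nat.exists_eq_add_of_le h
  rw [range_add, map_append, flatten_append]
  exact prefix_append _ _

theorem le_length_flatten_map_range {ws : ℕ → List C} (hws : ∀ k, ws k ≠ []) (k : ℕ) :
    k ≤ ((range k).map ws).flatten.length := by
  induction k with
  | zero => simp
  | succ k ih =>
    have := length_pos_iff.mpr (hws k)
    simp only [range_succ, map_append, map_cons, map_nil, flatten_append, flatten_cons,
      flatten_nil, append_nil, length_append]
    omega

variable [Inhabited C]

theorem periodic_eq_app (γ : List C) : periodic γ = app γ (periodic γ) := by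
  funext i
  rcases lt_or_ge i γ.length with h | h
  · rw [app_of_lt γ _ h, periodic, Nat.mod_eq_of_lt h, getD_eq_getElem _ _ h]
  · rw [app_of_le γ _ h, periodic, periodic, ← Nat.mod_eq_sub_mod h]

theorem concatSeq_eq_getD {ws : ℕ → List C} (hws : ∀ k, ws k ≠ []) {i k : ℕ}
    (h : i < ((range k).map ws).flatten.length) :
    concatSeq ws i = ((range k).map ws).flatten.getD i default := by
  have hi : i < ((range (i + 1)).map ws).flatten.length :=
    le_length_flatten_map_range hws (i + 1)
  rcases le_total k (i + 1) with hk | hk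
  · obtain ⟨t, ht⟩ := flatten_map_range_prefix ws hk
    rw [concatSeq, ← ht, getD_append _ _ _ _ h]
  · obtain ⟨t, ht⟩ := flatten_map_range_prefix ws hk
    rw [concatSeq, ← ht, getD_append _ _ _ _ hi]

theorem concatSeq_eq_app {ws : ℕ → List C} (hws : ∀ k, ws k ≠ []) :
    concatSeq ws = app (ws 0) (concatSeq fun k => ws (k + 1)) := by
  have hws' : ∀ k, ws (k + 1) ≠ [] := fun k => hws (k + 1)
  have hsplit : ∀ n, ((range (n + 1)).map ws).flatten =
      ws 0 ++ ((range n).map fun k => ws (k + 1)).flatten := by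
    intro n
    rw [range_succ_eq_map, map_cons, List.map_map, flatten_cons]
    rfl
  funext i
  have hi := le_length_flatten_map_range hws (i + 2)
  rw [concatSeq_eq_getD hws (k := i + 2) (by omega), hsplit]
  rcases lt_or_ge i (ws 0).length with h | h
  · rw [app_of_lt _ _ h, getD_append _ _ _ _ h, getD_eq_getElem _ _ h]
  · rw [app_of_le _ _ h, getD_append_right _ _ _ _ h, concatSeq_eq_getD hws']
    have := le_length_flatten_map_range hws' (i + 1)
    omega

theorem concatSeq_add_eq_app {ws : ℕ → List C} (hws : ∀ k, ws k ≠ []) (N : ℕ) :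
    (concatSeq fun k => ws (N + k)) = app (ws N) (concatSeq fun k => ws (N + 1 + k)) := by
  rw [concatSeq_eq_app fun k => hws (N + k)]
  simp only [Nat.add_zero, Nat.add_right_comm N 1, Nat.add_assoc]

theorem eq_concatSeq_of_eq_app {ws : ℕ → List C} (hws : ∀ k, ws k ≠ []) {x : ℕ → ℕ → C}
    (hx : ∀ k, x k = app (ws k) (x (k + 1))) (k : ℕ) : x k = concatSeq fun j => ws (k + j) := by
  funext i
  induction i using Nat.strong_induction_on generalizing k with
  | _ i ih =>
    rw [hx k, concatSeq_add_eq_app hws k]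
    rcases lt_or_ge i (ws k).length with h | h
    · rw [app_of_lt _ _ h, app_of_lt _ _ h]
    · have hpos := length_pos_iff.mpr (hws k)
      rw [app_of_le _ _ h, app_of_le _ _ h, ih _ (by omega) (k + 1)]

theorem periodic_eq_concatSeq {γ : List C} (hγ : γ ≠ []) : periodic γ = concatSeq fun _ => γ :=
  eq_concatSeq_of_eq_app (fun _ => hγ) (x := fun _ => periodic γ) (fun _ => periodic_eq_app γ) 0

theorem concatSeq_eq_app_flatten {ws : ℕ → List C} (hws : ∀ k, ws k ≠ []) (N : ℕ) :
    concatSeq ws = app ((range N).map ws).flatten (concatSeq fun k => ws (N + k)) := by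
  induction N with
  | zero => simp only [range_zero, map_nil, flatten_nil, Nat.zero_add]; rfl
  | succ N ih =>
    rw [ih, concatSeq_add_eq_app hws N, ← app_append, range_succ, map_append, flatten_append,
      map_singleton, flatten_singleton]

theorem exists_mem_of_concatSeq {ws : ℕ → List C} (hws : ∀ k, ws k ≠ []) (i : ℕ) :
    ∃ k, concatSeq ws i ∈ ws k := by
  have hi : i < ((range (i + 1)).map ws).flatten.length := le_length_flatten_map_range hws (i + 1)
  obtain ⟨_, hl, hmem⟩ := mem_flatten.mp (getElem_mem hi)
  obtain ⟨k, -, rfl⟩ := mem_map.mp hl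
  exact ⟨k, by rwa [concatSeq_eq_getD hws hi, getD_eq_getElem _ _ hi]⟩

theorem exists_concatSeq_eq_of_mem {ws : ℕ → List C} (hws : ∀ k, ws k ≠ []) {k : ℕ} {x : C}
    (hx : x ∈ ws k) : ∃ i, concatSeq ws i = x := by
  obtain ⟨r, hr, rfl⟩ := getElem_of_mem hx
  refine ⟨((range k).map ws).flatten.length + r, ?_⟩
  rw [concatSeq_eq_app_flatten hws k, app_length_add, concatSeq_add_eq_app hws, app_of_lt _ _ hr]

end Words

namespace Nat

variable {β : Type*} {f : Filter β} {u : β → ℕ}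

theorem eventually_le_limsup (hu : IsBoundedUnder (· ≤ ·) f u) :
    ∀ᶠ b in f, u b ≤ limsup u f :=
  (eventually_lt_of_limsup_lt (lt_add_one _) hu).mono fun _ => Nat.le_of_lt_succ

theorem frequently_eq_limsup [f.NeBot] (hu : IsBoundedUnder (· ≤ ·) f u) :
    ∃ᶠ b in f, u b = limsup u f := by
  have hge : ∃ᶠ b in f, limsup u f ≤ u b := by
    rcases Nat.eq_zero_or_pos (limsup u f) with h0 | hpos
    · exact .of_forall fun b => h0 ▸ Nat.zero_le _
    · exact (frequently_lt_of_lt_limsup (isCoboundedUnder_le_of_le f fun b => Nat.zero_le (u b))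
        (Nat.sub_one_lt_of_lt hpos)).mono fun _ h => by omega
  exact (hge.and_eventually (eventually_le_limsup hu)).mono fun _ h => le_antisymm h.2 h.1

theorem limsup_eq_of_eventually_le_of_frequently_eq [f.NeBot] {L : ℕ} (hle : ∀ᶠ b in f, u b ≤ L)
    (heq : ∃ᶠ b in f, u b = L) : limsup u f = L :=
  le_antisymm (limsup_le_of_le (isCoboundedUnder_le_of_le f fun b => Nat.zero_le (u b)) hle)
    (le_limsup_of_frequently_le (heq.mono fun _ => ge_of_eq) ⟨L, hle⟩)

end Nat

theorem limsup_periodic {l : List ℕ} {L : ℕ} (hL : L ∈ l) (hle : ∀ x ∈ l, x ≤ L) :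
    limsup (periodic l) atTop = L := by
  have hpos : 0 < l.length := length_pos_of_mem hL
  obtain ⟨r, hr, rfl⟩ := getElem_of_mem hL
  apply Nat.limsup_eq_of_eventually_le_of_frequently_eq
  · refine .of_forall fun i => hle _ ?_
    rw [periodic, getD_eq_getElem _ _ (Nat.mod_lt i hpos)]
    exact getElem_mem _
  · refine frequently_atTop.mpr fun a => ⟨a * l.length + r, ?_, ?_⟩
    · nlinarith
    · rw [periodic, Nat.mul_add_mod_self_right, Nat.mod_eq_of_lt hr, getD_eq_getElem _ _ hr]

theorem exists_limsup_periodic_eq_limsup_concatSeq {ls : ℕ → List ℕ} (hls : ∀ k, ls k ≠ [])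
    (hbdd : IsBoundedUnder (· ≤ ·) atTop (concatSeq ls)) :
    ∃ k, limsup (periodic (ls k)) atTop = limsup (concatSeq ls) atTop := by
  obtain ⟨N, hN⟩ := eventually_atTop.mp (Nat.eventually_le_limsup hbdd)
  let tail := fun k => ls (N + k)
  have htail : ∀ k, tail k ≠ [] := fun k => hls (N + k)
  have hsplit : concatSeq ls = app ((range N).map ls).flatten (concatSeq tail) :=
    concatSeq_eq_app_flatten hls N
  have hle : ∀ i, concatSeq tail i ≤ limsup (concatSeq ls) atTop := fun i => by
    have hN' := le_length_flatten_map_range hls N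
    simpa only [hsplit, app_length_add] using hN _ (le_add_right hN')
  have hlim : limsup (concatSeq tail) atTop = limsup (concatSeq ls) atTop := by
    rw [hsplit, limsup_app]
  obtain ⟨i, hi⟩ := (Nat.frequently_eq_limsup (f := atTop) (isBoundedUnder_of ⟨_, hle⟩)).exists
  obtain ⟨k, hk⟩ := exists_mem_of_concatSeq htail i
  rw [hi, hlim] at hk
  exact ⟨N + k, limsup_periodic hk fun x hx =>
    (exists_concatSeq_eq_of_mem htail hx).elim fun j hj => hj ▸ hle j⟩

section Automaton

variable {C M : Type*} (upd : M → C → M) (p : M → C → ℕ)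

def priorities (m : M) (w : ℕ → C) : ℕ → ℕ :=
  fun i => p (updStar upd m ((range i).map w)) (w i)

def pathPriorities : M → List C → List ℕ
  | _, [] => []
  | m, c :: u => p m c :: pathPriorities (upd m c) u

theorem length_pathPriorities (m : M) (u : List C) :
    (pathPriorities upd p m u).length = u.length := by
  induction u generalizing m with
  | nil => rfl
  | cons c u ih => simp only [pathPriorities, length_cons, ih]

theorem priorities_succ (m : M) (w : ℕ → C) (i : ℕ) :
    priorities upd p m w (i + 1) = priorities upd p (upd m (w 0)) (fun j => w (j + 1)) i := by
  simp only [priorities, range_succ_eq_map, map_cons, List.map_map]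
  rfl

theorem priorities_app (m : M) (u : List C) (w : ℕ → C) :
    priorities upd p m (app u w) =
      app (pathPriorities upd p m u) (priorities upd p (updStar upd m u) w) := by
  induction u generalizing m with
  | nil => rfl
  | cons c u ih =>
    funext i
    cases i with
    | zero => rfl
    | succ i => rw [priorities_succ]; exact congrFun (ih (upd m c)) i

theorem pathPriorities_ne_nil {m : M} {u : List C} (hu : u ≠ []) :
    pathPriorities upd p m u ≠ [] := by
  rw [← length_pos_iff, length_pathPriorities]
  exact length_pos_iff.mpr hu

variable [Inhabited C]

theorem priorities_concatSeq {m : M} {ws : ℕ → List C} (hws : ∀ k, ws k ≠ [])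
    (hcyc : ∀ k, updStar upd m (ws k) = m) :
    priorities upd p m (concatSeq ws) = concatSeq fun k => pathPriorities upd p m (ws k) := by
  have hx : ∀ k, priorities upd p m (concatSeq fun j => ws (k + j)) =
      app (pathPriorities upd p m (ws k))
        (priorities upd p m (concatSeq fun j => ws (k + 1 + j))) :=
    fun k => by rw [concatSeq_add_eq_app hws, priorities_app, hcyc]
  simpa only [Nat.zero_add] using
    eq_concatSeq_of_eq_app (fun k => pathPriorities_ne_nil upd p (hws k)) hx 0

theorem priorities_periodic {m : M} {γ : List C} (hγ : γ ≠ []) (hcyc : updStar upd m γ = m) :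
    priorities upd p m (periodic γ) = periodic (pathPriorities upd p m γ) := by
  rw [periodic_eq_concatSeq hγ, priorities_concatSeq upd p (fun _ => hγ) (fun _ => hcyc),
    periodic_eq_concatSeq (pathPriorities_ne_nil upd p hγ)]

end Automaton

theorem stmt2_general {C M : Type*} [Inhabited C]
    (upd : M → C → M) (init : M) (n : ℕ) (p : M → C → ℕ)
    (hp : ∀ m c, p m c ≤ n) (W : Set (ℕ → C))
    (hW : W = {w | Even (Filter.atTop.limsup
      (fun i => p (updStar upd init ((List.range i).map w)) (w i)))}) :
    PrefIndep upd init W ∧ CycleConsistent upd init W := by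
  have hmem : ∀ u w, app u w ∈ W ↔
      Even (limsup (priorities upd p (updStar upd init u) w) atTop) := fun u w => by
    subst hW
    show Even (limsup (priorities upd p init (app u w)) atTop) ↔ _
    rw [priorities_app, limsup_app]
  refine ⟨fun w₁ w₂ h w => by rw [hmem, hmem, h], fun w ws hws => ?_⟩
  have hne k := (hws k).1
  have hcyc k := (hws k).2
  have hbdd :
      IsBoundedUnder (· ≤ ·) atTop (priorities upd p (updStar upd init w) (concatSeq ws)) :=
    isBoundedUnder_of ⟨n, fun _ => hp _ _⟩
  rw [priorities_concatSeq upd p hne hcyc] at hbdd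
  obtain ⟨k, hk⟩ :=
    exists_limsup_periodic_eq_limsup_concatSeq (fun k => pathPriorities_ne_nil upd p (hne k)) hbdd
  simp only [hmem, priorities_periodic upd p (hne _) (hcyc _), priorities_concatSeq upd p hne hcyc]
  rw [← hk]
  exact ⟨fun h => h k, fun h => h k⟩

/-- The language recognized by a deterministic parity automaton `(M, p)`
(acceptance: even `limsup` of the priorities of the transitions along the run) is
`M`-prefix-independent and `M`-cycle-consistent. -/
theorem stmt2 {C M : Type*} [Inhabited C] [Finite M]
    (upd : M → C → M) (init : M) (n : ℕ) (p : M → C → ℕ)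
    (hp : ∀ m c, p m c ≤ n) (W : Set (ℕ → C))
    (hW : W = {w | Even (Filter.atTop.limsup
      (fun i => p (updStar upd init ((List.range i).map w)) (w i)))}) :
    PrefIndep upd init W ∧ CycleConsistent upd init W :=
  stmt2_general upd init n p hp W hW
end

section
/- Let λ ∈ (0,1) ∩ ℚ and let k be a positive integer with k ≥ ⌈1/λ − 1⌉. Then for every real number x with −k/(1−λ) ≤ x ≤ k/(1−λ), there exists a sequence of integer digits (x_i)_{i≥0} with each x_i ∈ [−k, k] ∩ ℤ such that x = Σ_{i=0}^∞ x_i λ^i (existence of a representation of x in base 1/λ with digits in [−k,k]). -/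
/-- Discounted sum `Σ_{i≥1} λ^{i-1} c_i` of an infinite word of rationals. -/
noncomputable def dsInfQ (l : ℚ) (w : ℕ → ℚ) : ℝ :=
  ∑' i : ℕ, (l : ℝ) ^ i * (w i : ℝ)

/-- Discounted sum of a finite word of rationals. -/
def dsFinQ (l : ℚ) (w : List ℚ) : ℚ :=
  ∑ i ∈ Finset.range w.length, l ^ i * w.getD i 0

/-- Greedy remainder sequence. -/
noncomputable def rem10 (L : ℝ) (k : ℤ) (x : ℝ) : ℕ → ℝ
  | 0 => x
  | n+1 => (rem10 L k x n
      - ((max (-k) ⌈rem10 L k x n - L * ((k : ℝ) / (1 - L))⌉ : ℤ) : ℝ)) / L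

/-- Greedy digit sequence. -/
noncomputable def dig10 (L : ℝ) (k : ℤ) (x : ℝ) (n : ℕ) : ℤ :=
  max (-k) ⌈rem10 L k x n - L * ((k : ℝ) / (1 - L))⌉

lemma step10 (L : ℝ) (hL0 : 0 < L) (hL1 : L < 1) (k : ℤ) (hk0 : 0 < k)
    (hLM : 1 ≤ L * ((k : ℝ) / (1 - L))) (r : ℝ)
    (hr : |r| ≤ (k : ℝ) / (1 - L)) :
    (-k ≤ max (-k) ⌈r - L * ((k : ℝ) / (1 - L))⌉ ∧
      max (-k) ⌈r - L * ((k : ℝ) / (1 - L))⌉ ≤ k) ∧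
    |r - ((max (-k) ⌈r - L * ((k : ℝ) / (1 - L))⌉ : ℤ) : ℝ)|
      ≤ L * ((k : ℝ) / (1 - L)) := by
  set M : ℝ := (k : ℝ) / (1 - L) with hMdef
  have h1L : (0:ℝ) < 1 - L := by linarith
  have hkM : (k : ℝ) = M - L * M := by
    rw [hMdef]; linear_combination -(div_mul_cancel₀ (k:ℝ) h1L.ne')
  obtain ⟨hr1, hr2⟩ := abs_le.mp hr
  set c : ℤ := ⌈r - L * M⌉ with hc
  have hcle : (r - L * M : ℝ) ≤ c := Int.le_ceil _
  have hclt : (c : ℝ) < r - L * M + 1 := by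
    have := Int.ceil_lt_add_one (r - L * M); linarith
  by_cases hck : -k ≤ c
  · have hmax : max (-k) c = c := max_eq_right hck
    have hck2 : c ≤ k := by
      have hc2 : (c : ℝ) ≤ k := by
        have hle : r - L * M ≤ (k : ℝ) := by rw [hkM]; linarith
        calc (c:ℝ) = (⌈r - L*M⌉ : ℝ) := by rw [hc]
        _ ≤ ((⌈(k:ℝ)⌉ : ℤ) : ℝ) := by exact_mod_cast Int.ceil_le_ceil hle
        _ = k := by norm_num
      exact_mod_cast hc2
    refine ⟨⟨by rw [hmax]; exact hck, by rw [hmax]; exact hck2⟩, ?_⟩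
    rw [hmax, abs_le]
    constructor <;> linarith
  · push_neg at hck
    have hmax : max (-k) c = -k := max_eq_left hck.le
    have hcK : (c : ℝ) < -(k:ℝ) := by exact_mod_cast hck
    refine ⟨⟨le_max_left _ _, by rw [hmax]; omega⟩, ?_⟩
    rw [hmax, abs_le]
    push_cast
    constructor <;> linarith

/-- every real `x ∈ [-k/(1-λ), k/(1-λ)]` has a representation
`x = Σ_{i≥0} x_i λ^i` with integer digits `x_i ∈ [-k, k]`, provided `k ≥ ⌈1/λ - 1⌉`. -/
theorem stmt10 (l : ℚ) (h0 : 0 < l) (h1 : l < 1)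
    (k : ℤ) (hk0 : 0 < k) (hk : ⌈1 / l - 1⌉ ≤ k)
    (x : ℝ) (hx1 : -(k : ℝ) / (1 - (l : ℝ)) ≤ x) (hx2 : x ≤ (k : ℝ) / (1 - (l : ℝ))) :
    ∃ d : ℕ → ℤ, (∀ i, -k ≤ d i ∧ d i ≤ k) ∧
      x = ∑' i : ℕ, (d i : ℝ) * (l : ℝ) ^ i := by
  set L : ℝ := (l : ℝ) with hLdef
  have hL0 : 0 < L := by rw [hLdef]; exact_mod_cast h0
  have hL1 : L < 1 := by rw [hLdef]; exact_mod_cast h1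
  have h1L : (0:ℝ) < 1 - L := by linarith
  set M : ℝ := (k : ℝ) / (1 - L) with hMdef
  have hkq : (1 / l - 1 : ℚ) ≤ k := le_trans (Int.le_ceil _) (by exact_mod_cast hk)
  have hLM : 1 ≤ L * M := by
    have hkr : 1 / L - 1 ≤ (k : ℝ) := by rw [hLdef]; exact_mod_cast hkq
    have h1k : 1 - L ≤ (k:ℝ) * L := by
      have hm := mul_le_mul_of_nonneg_right hkr hL0.le
      rw [sub_mul, one_div, inv_mul_cancel₀ hL0.ne'] at hm
      linarith
    rw [hMdef, mul_div_assoc', le_div_iff₀ h1L]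
    linarith
  -- invariant
  have hinv : ∀ n, |rem10 L k x n| ≤ M := by
    intro n
    induction n with
    | zero =>
      simp only [rem10, abs_le]
      constructor
      · rw [hMdef]; rw [neg_div] at hx1; linarith [hx1]
      · exact hx2
    | succ n ih =>
      have hs := step10 L hL0 hL1 k hk0 hLM (rem10 L k x n) ih
      show |(rem10 L k x n - ((max (-k) ⌈rem10 L k x n - L * M⌉ : ℤ) : ℝ)) / L| ≤ M
      rw [abs_div, abs_of_pos hL0, div_le_iff₀ hL0]
      linarith [hs.2]
  have hdig : ∀ n, -k ≤ dig10 L k x n ∧ dig10 L k x n ≤ k := fun n =>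
    (step10 L hL0 hL1 k hk0 hLM (rem10 L k x n) (hinv n)).1
  -- partial sums
  have hpart : ∀ n, x = (∑ i ∈ Finset.range n, (dig10 L k x i : ℝ) * L ^ i)
      + L ^ n * rem10 L k x n := by
    intro n
    induction n with
    | zero => simp [rem10]
    | succ n ih =>
      rw [Finset.sum_range_succ]
      have hrec : rem10 L k x (n+1)
          = (rem10 L k x n - ((dig10 L k x n : ℤ) : ℝ)) / L := rfl
      have key : L ^ (n+1) * rem10 L k x (n+1)
          = L ^ n * (rem10 L k x n - ((dig10 L k x n : ℤ) : ℝ)) := by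
        rw [hrec]; field_simp; ring
      rw [key]
      nth_rewrite 1 [ih]
      ring
  -- summability
  have hsum : Summable (fun i : ℕ => (dig10 L k x i : ℝ) * L ^ i) := by
    refine Summable.of_norm_bounded (g := fun i => (k : ℝ) * L ^ i)
      ((summable_geometric_of_lt_one hL0.le hL1).mul_left _) (fun i => ?_)
    rw [Real.norm_eq_abs, abs_mul, abs_pow, abs_of_pos hL0]
    have hb : |(dig10 L k x i : ℝ)| ≤ (k : ℝ) := by
      have h := hdig i
      rw [abs_le]
      exact ⟨by exact_mod_cast h.1, by exact_mod_cast h.2⟩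
    exact mul_le_mul_of_nonneg_right hb (pow_nonneg hL0.le i)
  -- limit
  have htends : Filter.Tendsto (fun n => L ^ n * rem10 L k x n) Filter.atTop (nhds 0) := by
    apply squeeze_zero_norm (fun n => ?_)
      (by simpa using (tendsto_pow_atTop_nhds_zero_of_lt_one hL0.le hL1).const_mul M)
    rw [norm_mul, norm_pow, Real.norm_eq_abs, Real.norm_eq_abs, abs_of_pos hL0]
    calc L ^ n * |rem10 L k x n| ≤ L ^ n * M :=
          mul_le_mul_of_nonneg_left (hinv n) (pow_nonneg hL0.le n)
      _ = M * L ^ n := mul_comm _ _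
  refine ⟨dig10 L k x, hdig, ?_⟩
  have h1 : Filter.Tendsto (fun n => ∑ i ∈ Finset.range n, (dig10 L k x i : ℝ) * L ^ i)
      Filter.atTop (nhds (∑' i, (dig10 L k x i : ℝ) * L ^ i)) :=
    hsum.hasSum.tendsto_sum_nat
  have h2 : Filter.Tendsto (fun n => ∑ i ∈ Finset.range n, (dig10 L k x i : ℝ) * L ^ i)
      Filter.atTop (nhds x) := by
    have : (fun n => ∑ i ∈ Finset.range n, (dig10 L k x i : ℝ) * L ^ i)
        = fun n => x - L ^ n * rem10 L k x n := by
      funext n; have := hpart n; linarith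
    rw [this]
    simpa using (tendsto_const_nhds (x := x)).sub htends
  exact (tendsto_nhds_unique h2 h1)
end

section
/- Let λ = p/q ∈ (0,1) with p, q coprime integers, p ≥ 2, q > p, let k = ⌈1/λ − 1⌉, and C = [−k,k] ∩ ℤ. Define gap(w) = DS_λ(w)/λ^{|w|} for finite words w ∈ C*. Then the gap function, restricted to values lying in the interval [−k/(1−λ), k/(1−λ)], takes infinitely many distinct values; in particular there exists an infinite word c₁c₂… ∈ C^ω such that the sequence (gap(c₁…c_i))_{i≥1} consists of pairwise distinct rationals in (0, 1/λ]. -/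
/-- Discounted sum of a finite word of integer colors. -/
def dsFinZ (l : ℚ) (w : List ℤ) : ℚ :=
  ∑ i ∈ Finset.range w.length, l ^ i * (w.getD i 0 : ℚ)

/-- The gap of a finite word: `DS_λ(w) / λ^{|w|}`. -/
def gapQ (l : ℚ) (w : List ℤ) : ℚ := dsFinZ l w / l ^ w.length

/-- Auxiliary recursive construction: colors and gaps. -/
def seqF (l : ℚ) : ℕ → ℤ × ℚ
  | 0 => (1, 1 / l)
  | n + 1 => (-⌊(seqF l n).2⌋, ((seqF l n).2 - ⌊(seqF l n).2⌋) / l)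

lemma dsFinZ_append (l : ℚ) (w : List ℤ) (a : ℤ) :
    dsFinZ l (w ++ [a]) = dsFinZ l w + l ^ w.length * a := by
  unfold dsFinZ
  rw [List.length_append, List.length_singleton, Finset.sum_range_succ]
  congr 1
  · apply Finset.sum_congr rfl
    intro i hi
    rw [Finset.mem_range] at hi
    rw [List.getD_append _ _ _ _ hi]
  · rw [List.getD_append_right _ _ _ _ le_rfl]
    simp

lemma gapQ_append (l : ℚ) (hl : l ≠ 0) (w : List ℤ) (a : ℤ) :
    gapQ l (w ++ [a]) = (gapQ l w + a) / l := by
  unfold gapQ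
  rw [dsFinZ_append, List.length_append, List.length_singleton]
  field_simp
  ring

lemma gapQ_prefix (l : ℚ) (hl : l ≠ 0) :
    ∀ n, gapQ l ((List.range (n + 1)).map (fun j => (seqF l j).1)) = (seqF l n).2 := by
  intro n
  induction n with
  | zero => simp [gapQ, dsFinZ, seqF]
  | succ n ih =>
    rw [List.range_succ, List.map_append, List.map_singleton, gapQ_append l hl, ih]
    show ((seqF l n).2 + ((-⌊(seqF l n).2⌋ : ℤ) : ℚ)) / l = _
    simp only [seqF]
    push_cast
    ring

lemma seqF_key (p q : ℤ) (hco : Int.gcd p q = 1) (hp : 2 ≤ p) (hq : p < q)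
    (l : ℚ) (hl : l = (p : ℚ) / q) (n : ℕ) :
    ∃ N : ℤ, ¬(p ∣ N) ∧ (seqF l n).2 = (N : ℚ) / (p : ℚ) ^ (n + 1) ∧
      0 < (seqF l n).2 ∧ (seqF l n).2 ≤ 1 / l := by
  have hq0 : (0 : ℚ) < q := by exact_mod_cast (by omega : (0:ℤ) < q)
  have hp0 : (0 : ℚ) < p := by exact_mod_cast (by omega : (0:ℤ) < p)
  have hl0 : 0 < l := by rw [hl]; positivity
  have hinv : 1 / l = (q : ℚ) / p := by rw [hl, one_div_div]
  have hpq : ¬ (p ∣ q) := by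
    intro h
    have h1 : p ∣ (Int.gcd p q : ℤ) := Int.dvd_coe_gcd dvd_rfl h
    rw [hco] at h1
    have := Int.le_of_dvd one_pos h1
    omega
  have hcop : IsCoprime p q := Int.isCoprime_iff_gcd_eq_one.mpr hco
  induction n with
  | zero =>
    refine ⟨q, hpq, ?_, ?_, le_rfl⟩
    · show 1 / l = _
      rw [hinv]; norm_num
    · show 0 < 1 / l
      positivity
  | succ n ih =>
    obtain ⟨N, hN, hrep, hpos, hle⟩ := ih
    set g := (seqF l n).2 with hg
    have hfl : (⌊g⌋ : ℚ) ≤ g := Int.floor_le g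
    have hfu : g < ⌊g⌋ + 1 := Int.lt_floor_add_one g
    have hppow : ((p : ℚ)) ^ (n + 1) ≠ 0 := by positivity
    have hfrac_ne : g ≠ (⌊g⌋ : ℚ) := by
      intro h
      apply hN
      have h2 : (⌊g⌋ : ℚ) * (p : ℚ) ^ (n + 1) = (N : ℚ) := by
        rw [← h, hrep]
        field_simp
      have hz : N = ⌊g⌋ * p ^ (n + 1) := by exact_mod_cast h2.symm
      rw [hz]
      exact Dvd.dvd.mul_left (dvd_pow_self p n.succ_ne_zero) _
    have hfracpos : 0 < g - ⌊g⌋ := by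
      rcases lt_or_eq_of_le hfl with h | h
      · linarith
      · exact absurd h.symm hfrac_ne
    have hnext : (seqF l (n + 1)).2 = (g - ⌊g⌋) / l := by
      simp [seqF, ← hg]
    refine ⟨(N - ⌊g⌋ * p ^ (n + 1)) * q, ?_, ?_, ?_, ?_⟩
    · intro h
      have h1 : p ∣ N - ⌊g⌋ * p ^ (n + 1) := hcop.dvd_of_dvd_mul_right h
      apply hN
      have h2 : N = (N - ⌊g⌋ * p ^ (n + 1)) + ⌊g⌋ * p ^ (n + 1) := by ring
      rw [h2]
      exact dvd_add h1 (Dvd.dvd.mul_left (dvd_pow_self p n.succ_ne_zero) _)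
    · rw [hnext, hrep, hl]
      have hq0' : (q : ℚ) ≠ 0 := ne_of_gt hq0
      have hp0' : (p : ℚ) ≠ 0 := ne_of_gt hp0
      field_simp
      push_cast
      ring
    · rw [hnext]
      exact div_pos hfracpos hl0
    · rw [hnext]
      gcongr
      linarith

lemma seqF_ne (p q : ℤ) (hco : Int.gcd p q = 1) (hp : 2 ≤ p) (hq : p < q)
    (l : ℚ) (hl : l = (p : ℚ) / q) {m n : ℕ} (hmn : m < n) :
    (seqF l m).2 ≠ (seqF l n).2 := by
  intro heq
  obtain ⟨N₁, hN₁, h₁, _, _⟩ := seqF_key p q hco hp hq l hl m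
  obtain ⟨N₂, hN₂, h₂, _, _⟩ := seqF_key p q hco hp hq l hl n
  have hp0 : (0 : ℚ) < p := by exact_mod_cast (by omega : (0:ℤ) < p)
  rw [h₁, h₂, div_eq_div_iff (by positivity) (by positivity)] at heq
  have hz : N₁ * p ^ (n + 1) = N₂ * p ^ (m + 1) := by exact_mod_cast heq
  apply hN₂
  have hsplit : n + 1 = (m + 1) + (n - m) := by omega
  have h3 : N₁ * p ^ (n - m) * p ^ (m + 1) = N₂ * p ^ (m + 1) := by
    rw [← hz, hsplit, pow_add]; ring
  have hcancel : N₁ * p ^ (n - m) = N₂ :=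
    mul_right_cancel₀ (pow_ne_zero _ (by omega : p ≠ 0)) h3
  rw [← hcancel]
  exact Dvd.dvd.mul_left (dvd_pow_self p (by omega : n - m ≠ 0)) _

/-- for `λ = p/q` with `p, q` coprime, `p ≥ 2`, `q > p`, `k = ⌈1/λ - 1⌉`
and colors `[-k, k] ∩ ℤ`, the gap function takes infinitely many values in the interval
`[-k/(1-λ), k/(1-λ)]`; in particular there is an infinite word whose prefixes have
pairwise distinct gaps, all lying in `(0, 1/λ]`. -/
theorem stmt11 (p q : ℤ) (hco : Int.gcd p q = 1) (hp : 2 ≤ p) (hq : p < q)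
    (l : ℚ) (hl : l = (p : ℚ) / q) (k : ℤ) (hk : k = ⌈1 / l - 1⌉) :
    {v : ℚ | ∃ w : List ℤ, (∀ c ∈ w, -k ≤ c ∧ c ≤ k) ∧ v = gapQ l w ∧
      -((k : ℚ) / (1 - l)) ≤ v ∧ v ≤ (k : ℚ) / (1 - l)}.Infinite ∧
    ∃ c : ℕ → ℤ, (∀ i, -k ≤ c i ∧ c i ≤ k) ∧
      (∀ i j : ℕ, 1 ≤ i → 1 ≤ j → i ≠ j →
        gapQ l ((List.range i).map c) ≠ gapQ l ((List.range j).map c)) ∧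
      (∀ i : ℕ, 1 ≤ i →
        0 < gapQ l ((List.range i).map c) ∧ gapQ l ((List.range i).map c) ≤ 1 / l) := by
  have hq0 : (0 : ℚ) < q := by exact_mod_cast (by omega : (0:ℤ) < q)
  have hp0 : (0 : ℚ) < p := by exact_mod_cast (by omega : (0:ℤ) < p)
  have hl0 : 0 < l := by rw [hl]; positivity
  have hl1 : l < 1 := by
    rw [hl, div_lt_one hq0]
    exact_mod_cast hq
  have hlne : l ≠ 0 := ne_of_gt hl0
  have hinv : 1 / l = (q : ℚ) / p := by rw [hl, one_div_div]
  have hpq : ¬ (p ∣ q) := by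
    intro h
    have h1 : p ∣ (Int.gcd p q : ℤ) := Int.dvd_coe_gcd dvd_rfl h
    rw [hco] at h1
    have := Int.le_of_dvd one_pos h1
    omega
  have h1l : (1 : ℚ) < 1 / l := one_lt_one_div hl0 hl1
  have hk1 : 1 ≤ k := by
    rw [hk]
    have : (0 : ℤ) < ⌈1 / l - 1⌉ := Int.ceil_pos.mpr (by linarith)
    omega
  have hkc : k = ⌈1 / l⌉ - 1 := by rw [hk, Int.ceil_sub_one]
  -- 1/l is not an integer
  have han : ∀ z : ℤ, (z : ℚ) ≠ 1 / l := by
    intro z h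
    apply hpq
    rw [hinv] at h
    have h2 : (z : ℚ) * p = q := by field_simp at h; linarith
    exact ⟨z, by exact_mod_cast h2.symm ▸ (by push_cast; ring : ((z : ℚ) * p) = (p * z : ℤ))⟩
  set c : ℕ → ℤ := fun j => (seqF l j).1 with hc
  have hkey := seqF_key p q hco hp hq l hl
  -- floor bounds
  have hfloor : ∀ n : ℕ, 0 ≤ ⌊(seqF l n).2⌋ ∧ ⌊(seqF l n).2⌋ ≤ k := by
    intro n
    obtain ⟨N, hN, hrep, hpos, hle⟩ := hkey n
    constructor
    · exact Int.floor_nonneg.mpr hpos.le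
    · have hlt : (⌊(seqF l n).2⌋ : ℚ) < 1 / l :=
        lt_of_le_of_ne ((Int.floor_le _).trans hle) (han _)
      have := Int.lt_ceil.mpr hlt
      omega
  have hcol : ∀ i, -k ≤ c i ∧ c i ≤ k := by
    intro i
    cases i with
    | zero =>
      have : c 0 = 1 := rfl
      omega
    | succ n =>
      have h := hfloor n
      have : c (n + 1) = -⌊(seqF l n).2⌋ := rfl
      omega
  have hne : ∀ {m n : ℕ}, m ≠ n → (seqF l m).2 ≠ (seqF l n).2 := by
    intro m n hmn
    rcases lt_or_gt_of_ne hmn with h | h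
    · exact seqF_ne p q hco hp hq l hl h
    · exact (seqF_ne p q hco hp hq l hl h).symm
  have hgap := gapQ_prefix l hlne
  -- interval facts
  have h1sub : (0 : ℚ) < 1 - l := by linarith
  have hkq : (1 : ℚ) / l - 1 ≤ k := by rw [hk]; exact_mod_cast Int.le_ceil _
  have hub : 1 / l ≤ (k : ℚ) / (1 - l) := by
    rw [div_le_div_iff₀ hl0 h1sub]
    have h2 := mul_le_mul_of_nonneg_right hkq hl0.le
    have h3 : (1 / l - 1) * l = 1 - l := by field_simp
    linarith
  have hkpos : (0 : ℚ) < k := by exact_mod_cast (by omega : (0:ℤ) < k)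
  constructor
  · apply Set.infinite_of_injective_forall_mem (f := fun n : ℕ => (seqF l n).2)
    · intro m n h
      by_contra hmn
      exact hne hmn h
    · intro n
      obtain ⟨N, hN, hrep, hpos, hle⟩ := hkey n
      refine ⟨(List.range (n + 1)).map c, ?_, (hgap n).symm, ?_, ?_⟩
      · intro x hx
        obtain ⟨j, _, rfl⟩ := List.mem_map.mp hx
        exact hcol j
      · have h0 : (0 : ℚ) ≤ (k : ℚ) / (1 - l) := by positivity
        linarith
      · linarith
  · refine ⟨c, hcol, ?_, ?_⟩
    · intro i j hi hj hij
      obtain ⟨m, rfl⟩ : ∃ m, i = m + 1 := ⟨i - 1, by omega⟩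
      obtain ⟨n, rfl⟩ : ∃ n, j = n + 1 := ⟨j - 1, by omega⟩
      rw [hgap m, hgap n]
      exact hne (by omega)
    · intro i hi
      obtain ⟨n, rfl⟩ : ∃ n, i = n + 1 := ⟨i - 1, by omega⟩
      rw [hgap n]
      obtain ⟨N, hN, hrep, hpos, hle⟩ := hkey n
      exact ⟨hpos, hle⟩
end

section
/- Let λ = p/q ∈ (0,1) with p, q coprime, p ≥ 2. Define a sequence of rationals by g₁ = q/p and g_{i+1} = (g_i − ⌊g_i⌋)·(q/p). Then for every i ≥ 1, the reduced denominator of g_i is p^i; consequently all g_i are pairwise distinct and none is an integer. -/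
/-!
Write `g n = m / p ^ (n + 1)` in lowest terms. Subtracting the floor changes `m` by a multiple of
`p ^ (n + 1)`, so the numerator of the fractional part is still prime to `p`; multiplying by `q / p`
with `q` prime to `p` then multiplies the numerator by `q` and the denominator by `p` without any
cancellation. Since `p ≥ 2`, the denominators `p ^ (n + 1)` are pairwise distinct and never `1`.
-/

namespace Rat

theorem den_mul_eq_of_coprime {x y : ℚ} (hxy : Nat.Coprime x.num.natAbs y.den)
    (hyx : Nat.Coprime y.num.natAbs x.den) : (x * y).den = x.den * y.den := by
  have hcop : Nat.Coprime (x.num * y.num).natAbs (x.den * y.den) := by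
    rw [Int.natAbs_mul]
    exact Nat.Coprime.mul_left (x.reduced.mul_right hxy) (hyx.mul_right y.reduced)
  rw [mul_den, hcop.gcd_eq_one, Nat.div_one]

theorem den_natCast_mul_inv_natCast {q p : ℕ} (hqp : Nat.Coprime q p) (hp : 0 < p) :
    ((q : ℚ) * (p : ℚ)⁻¹).den = p := by
  rw [den_mul_eq_of_coprime (by simpa [inv_natCast_den_of_pos hp] using hqp)
    (by simp [inv_natCast_num_of_pos hp]), inv_natCast_den_of_pos hp, den_natCast, one_mul]

theorem den_fract_mul_div_of_den_eq_pow {x : ℚ} {p q k : ℕ} (hx : x.den = p ^ (k + 1))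
    (hpq : Nat.Coprime p q) : (Int.fract x * (q / p)).den = p ^ (k + 2) := by
  have hp : 0 < p := Nat.pos_of_ne_zero fun h => x.den_ne_zero (by simp [hx, h])
  set y := Int.fract x * q with hy
  have hyden : y.den = p ^ (k + 1) := by
    rw [hy, den_mul_eq_of_coprime (by simp) (by simpa [den_intFract, hx] using
      (hpq.pow_left (k + 1)).symm), den_intFract, hx, den_natCast, mul_one]
  have hynum : Nat.Coprime y.num.natAbs p :=
    y.reduced.coprime_dvd_right (hyden ▸ dvd_pow_self p k.succ_ne_zero)
  rw [div_eq_mul_inv, ← mul_assoc, ← hy, den_mul_eq_of_coprime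
    (by rwa [inv_natCast_den_of_pos hp]) (by simp [inv_natCast_num_of_pos hp]),
    inv_natCast_den_of_pos hp, hyden, ← pow_succ]

end Rat

theorem stmt12_general (p q : ℕ) (hco : Nat.Coprime p q) (hp : 2 ≤ p)
    (g : ℕ → ℚ) (hg0 : g 0 = (q : ℚ) / p)
    (hgs : ∀ n, g (n + 1) = (g n - (⌊g n⌋ : ℚ)) * ((q : ℚ) / p)) :
    (∀ n, (g n).den = p ^ (n + 1)) ∧ Function.Injective g ∧ ∀ n, (g n).den ≠ 1 := by
  have hden : ∀ n, (g n).den = p ^ (n + 1) := by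
    intro n
    induction n with
    | zero =>
      rw [hg0, div_eq_mul_inv, Rat.den_natCast_mul_inv_natCast hco.symm (by omega), pow_one]
    | succ n ih => rw [hgs, Int.self_sub_floor]; exact Rat.den_fract_mul_div_of_den_eq_pow ih hco
  refine ⟨hden, fun a b hab => ?_, fun n h => ?_⟩
  · have := Nat.pow_right_injective hp (by rw [← hden a, ← hden b, hab] : p ^ (a + 1) = p ^ (b + 1))
    omega
  · exact (Nat.one_lt_pow n.succ_ne_zero hp).ne' (hden n ▸ h)

/-- for `λ = p/q` with `p, q` coprime, `p ≥ 2`, `q > p`, the sequence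
`g₁ = q/p`, `g_{i+1} = (g_i - ⌊g_i⌋)·(q/p)` has reduced denominators `p^i`; hence all its
terms are pairwise distinct and none is an integer. -/
theorem stmt12 (p q : ℕ) (hco : Nat.Coprime p q) (hp : 2 ≤ p) (hq : p < q)
    (g : ℕ → ℚ) (hg0 : g 0 = (q : ℚ) / p)
    (hgs : ∀ n, g (n + 1) = (g n - (⌊g n⌋ : ℚ)) * ((q : ℚ) / p)) :
    (∀ n, (g n).den = p ^ (n + 1)) ∧ Function.Injective g ∧ ∀ n, (g n).den ≠ 1 :=
  stmt12_general p q hco hp g hg0 hgs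
end

section
/- Define, for n ∈ ℕ, the finite word w_n over {−1, 1} consisting of n copies of 1 followed by (n+1) copies of −1. Then (i) for every n, the periodic word (w_n)^ω has mean payoff limsup_{N→∞} (1/N) Σ_{i=1}^N c_i = −1/(2n+1) < 0; and (ii) the infinite concatenation w₀ w₁ w₂ … has mean payoff exactly 0, hence is in MP^{≥0} while each (w_n)^ω is not. -/
/-- Mean payoff of an infinite word of integers: `limsup` of the averages of the
partial sums. -/
noncomputable def mpVal (w : ℕ → ℤ) : ℝ :=
  Filter.atTop.limsup fun N => (∑ i ∈ Finset.range N, (w i : ℝ)) / N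

open Filter Finset

/- ### Auxiliary lemmas -/

lemma sum_getD (γ : List ℤ) : ∑ j ∈ Finset.range γ.length, γ.getD j 0 = γ.sum := by
  induction γ with
  | nil => simp
  | cons a t ih =>
    rw [List.length_cons, Finset.sum_range_succ']
    simp only [List.getD_cons_succ, List.getD_cons_zero, ih, List.sum_cons]
    ring

lemma abs_getD_le (γ : List ℤ) (hb : ∀ x ∈ γ, |x| ≤ 1) (j : ℕ) : |γ.getD j 0| ≤ 1 := by
  rcases lt_or_ge j γ.length with h | h
  · rw [List.getD_eq_getElem _ _ h]
    exact hb _ (List.getElem_mem h)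
  · rw [List.getD_eq_default _ _ h]
    norm_num

lemma periodic_apply (γ : List ℤ) (i : ℕ) : periodic γ i = γ.getD (i % γ.length) 0 := rfl

lemma periodic_sum_blocks (γ : List ℤ) (q : ℕ) :
    ∑ i ∈ Finset.range (q * γ.length), periodic γ i = q * γ.sum := by
  induction q with
  | zero => simp
  | succ q ih =>
    rw [Nat.succ_mul, Finset.sum_range_add, ih]
    have h : ∀ j ∈ Finset.range γ.length, periodic γ (q * γ.length + j) = γ.getD j 0 := by
      intro j hj
      rw [Finset.mem_range] at hj
      rw [periodic_apply, add_comm, Nat.add_mul_mod_self_right, Nat.mod_eq_of_lt hj]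
    rw [Finset.sum_congr rfl h, sum_getD]
    push_cast
    ring

lemma periodic_sum (γ : List ℤ) (hL : 0 < γ.length) (N : ℕ) :
    ∑ i ∈ Finset.range N, periodic γ i
      = (N / γ.length : ℕ) * γ.sum + ∑ j ∈ Finset.range (N % γ.length), γ.getD j 0 := by
  conv_lhs => rw [show N = (N / γ.length) * γ.length + N % γ.length by
    rw [mul_comm]; exact (Nat.div_add_mod N γ.length).symm]
  rw [Finset.sum_range_add, periodic_sum_blocks]
  congr 1
  refine Finset.sum_congr rfl fun j hj => ?_
  rw [Finset.mem_range] at hj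
  rw [periodic_apply, add_comm, Nat.add_mul_mod_self_right,
    Nat.mod_eq_of_lt (lt_trans hj (Nat.mod_lt _ hL))]

lemma tendsto_periodic_avg (γ : List ℤ) (hL : 0 < γ.length) (hb : ∀ x ∈ γ, |x| ≤ 1) :
    Tendsto (fun N : ℕ => (∑ i ∈ Finset.range N, ((periodic γ i : ℤ) : ℝ)) / N) atTop
      (nhds ((γ.sum : ℝ) / (γ.length : ℝ))) := by
  have hL0 : (0:ℝ) < (γ.length:ℝ) := by exact_mod_cast hL
  have key : ∀ N : ℕ,
      |(∑ i ∈ Finset.range N, ((periodic γ i : ℤ) : ℝ)) - N * ((γ.sum:ℝ)/(γ.length:ℝ))|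
        ≤ (γ.length:ℝ) + |(γ.sum:ℝ)| := by
    intro N
    have hf := periodic_sum γ hL N
    have hrem : |(∑ j ∈ Finset.range (N % γ.length), γ.getD j 0 : ℤ)|
        ≤ ((N % γ.length : ℕ) : ℤ) := by
      calc |(∑ j ∈ Finset.range (N % γ.length), γ.getD j 0 : ℤ)|
          ≤ ∑ j ∈ Finset.range (N % γ.length), |γ.getD j 0| := Finset.abs_sum_le_sum_abs _ _
        _ ≤ ∑ _j ∈ Finset.range (N % γ.length), 1 :=
            Finset.sum_le_sum fun j _ => abs_getD_le γ hb j
        _ = ((N % γ.length : ℕ) : ℤ) := by simp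
    have hcast : ((∑ i ∈ Finset.range N, periodic γ i : ℤ) : ℝ)
        = ∑ i ∈ Finset.range N, ((periodic γ i : ℤ) : ℝ) := Int.cast_sum _ _
    have hsumR : (∑ i ∈ Finset.range N, ((periodic γ i : ℤ) : ℝ))
        = ((N / γ.length : ℕ) : ℝ) * (γ.sum : ℝ)
          + ((∑ j ∈ Finset.range (N % γ.length), γ.getD j 0 : ℤ) : ℝ) := by
      rw [← hcast, hf, Int.cast_add, Int.cast_mul, Int.cast_natCast]
    have hdm : (N / γ.length) * γ.length + N % γ.length = N := by
      rw [mul_comm]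
      exact Nat.div_add_mod N γ.length
    have hN : (N : ℝ) = ((N / γ.length : ℕ) : ℝ) * (γ.length : ℝ)
        + ((N % γ.length : ℕ) : ℝ) := by
      exact_mod_cast hdm.symm
    rw [hsumR, hN, add_mul, mul_assoc, mul_comm ((γ.length:ℕ):ℝ),
      div_mul_cancel₀ _ (ne_of_gt hL0)]
    have heq : ((N / γ.length : ℕ) : ℝ) * (γ.sum : ℝ)
          + ((∑ j ∈ Finset.range (N % γ.length), γ.getD j 0 : ℤ) : ℝ)
          - (((N / γ.length : ℕ) : ℝ) * (γ.sum : ℝ)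
            + ((N % γ.length : ℕ) : ℝ) * ((γ.sum:ℝ)/(γ.length:ℝ)))
        = ((∑ j ∈ Finset.range (N % γ.length), γ.getD j 0 : ℤ) : ℝ)
          - ((N % γ.length : ℕ) : ℝ) * ((γ.sum:ℝ)/(γ.length:ℝ)) := by ring
    rw [heq]
    have h1 : |((∑ j ∈ Finset.range (N % γ.length), γ.getD j 0 : ℤ) : ℝ)|
        ≤ ((N % γ.length : ℕ) : ℝ) := by
      rw [← Int.cast_abs]
      have h1' := (Int.cast_le (R := ℝ)).mpr hrem
      rw [Int.cast_natCast] at h1'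
      exact h1'
    have hrL : ((N % γ.length : ℕ) : ℝ) ≤ (γ.length : ℝ) := by
      exact_mod_cast (Nat.mod_lt _ hL).le
    have h2 : |((N % γ.length : ℕ) : ℝ) * ((γ.sum:ℝ)/(γ.length:ℝ))| ≤ |(γ.sum:ℝ)| := by
      rw [abs_mul, abs_div,
        abs_of_nonneg (show (0:ℝ) ≤ ((N % γ.length : ℕ) : ℝ) by positivity),
        abs_of_pos hL0]
      calc ((N % γ.length : ℕ) : ℝ) * (|(γ.sum:ℝ)| / (γ.length:ℝ))
          ≤ (γ.length : ℝ) * (|(γ.sum:ℝ)| / (γ.length:ℝ)) :=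
            mul_le_mul_of_nonneg_right hrL (by positivity)
        _ = |(γ.sum:ℝ)| := by
            rw [mul_comm, div_mul_cancel₀ _ (ne_of_gt hL0)]
    calc |((∑ j ∈ Finset.range (N % γ.length), γ.getD j 0 : ℤ) : ℝ)
          - ((N % γ.length : ℕ) : ℝ) * ((γ.sum:ℝ)/(γ.length:ℝ))|
        ≤ |((∑ j ∈ Finset.range (N % γ.length), γ.getD j 0 : ℤ) : ℝ)|
          + |((N % γ.length : ℕ) : ℝ) * ((γ.sum:ℝ)/(γ.length:ℝ))| := abs_sub _ _
      _ ≤ ((N % γ.length : ℕ) : ℝ) + |(γ.sum:ℝ)| := add_le_add h1 h2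
      _ ≤ (γ.length : ℝ) + |(γ.sum:ℝ)| := by linarith
  have h0 : Tendsto (fun N : ℕ =>
      (∑ i ∈ Finset.range N, ((periodic γ i : ℤ) : ℝ)) / N - (γ.sum:ℝ)/(γ.length:ℝ)) atTop
      (nhds 0) := by
    apply squeeze_zero_norm' (a := fun N : ℕ => ((γ.length : ℝ) + |(γ.sum:ℝ)|) / N)
    · filter_upwards [eventually_ge_atTop 1] with N hN
      have hN0 : (0:ℝ) < (N:ℝ) := by exact_mod_cast hN
      have hshow : (∑ i ∈ Finset.range N, ((periodic γ i : ℤ) : ℝ)) / N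
            - (γ.sum:ℝ)/(γ.length:ℝ)
          = ((∑ i ∈ Finset.range N, ((periodic γ i : ℤ) : ℝ))
              - N * ((γ.sum:ℝ)/(γ.length:ℝ))) / N := by
        rw [sub_div, mul_div_cancel_left₀ _ (ne_of_gt hN0)]
      rw [Real.norm_eq_abs, hshow, abs_div, abs_of_pos hN0]
      gcongr
      exact key N
    · exact tendsto_const_div_atTop_nhds_zero_nat _
  have h1 := h0.add (tendsto_const_nhds (x := (γ.sum:ℝ)/(γ.length:ℝ)) (f := atTop))
  simpa using h1

lemma mpVal_eq_of_tendsto {f : ℕ → ℤ} {a : ℝ}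
    (h : Tendsto (fun N : ℕ => (∑ i ∈ Finset.range N, (f i : ℝ)) / N) atTop (nhds a)) :
    mpVal f = a :=
  h.limsup_eq

/- ### The specific words -/

def wseq : ℕ → List ℤ := fun n => List.replicate n (1 : ℤ) ++ List.replicate (n + 1) (-1)

lemma wseq_length (n : ℕ) : (wseq n).length = 2 * n + 1 := by
  simp [wseq]; omega

lemma wseq_sum (n : ℕ) : (wseq n).sum = -1 := by
  simp [wseq, List.sum_replicate]

lemma wseq_mem (n : ℕ) : ∀ x ∈ wseq n, |x| ≤ 1 := by
  intro x hx
  simp only [wseq, List.mem_append, List.mem_replicate] at hx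
  rcases hx with ⟨-, rfl⟩ | ⟨-, rfl⟩ <;> norm_num

lemma flatten_succ (m : ℕ) :
    ((List.range (m + 1)).map wseq).flatten = ((List.range m).map wseq).flatten ++ wseq m := by
  rw [List.range_succ, List.map_append, List.flatten_append]
  simp

lemma len_flatten (m : ℕ) : (((List.range m).map wseq).flatten).length = m * m := by
  induction m with
  | zero => simp
  | succ m ih =>
    rw [flatten_succ, List.length_append, ih, wseq_length]
    ring

lemma sum_flatten (m : ℕ) : (((List.range m).map wseq).flatten).sum = -(m : ℤ) := by
  induction m with
  | zero => simp
  | succ m ih =>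
    rw [flatten_succ, List.sum_append, ih, wseq_sum]
    push_cast
    ring

lemma flatten_prefix {m m' : ℕ} (h : m ≤ m') : ∃ t,
    ((List.range m').map wseq).flatten = ((List.range m).map wseq).flatten ++ t := by
  obtain ⟨k, rfl⟩ := Nat.exists_eq_add_of_le h
  clear h
  induction k with
  | zero => exact ⟨[], by simp⟩
  | succ k ih =>
    obtain ⟨t, ht⟩ := ih
    exact ⟨t ++ wseq (m + k), by rw [← Nat.add_assoc, flatten_succ, ht, List.append_assoc]⟩

lemma concatSeq_apply (i : ℕ) :
    concatSeq wseq i = (((List.range (i + 1)).map wseq).flatten).getD i 0 := rfl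

lemma concatSeq_eq (m i : ℕ) (hi : i < m * m) :
    concatSeq wseq i = (((List.range m).map wseq).flatten).getD i 0 := by
  rw [concatSeq_apply]
  rcases le_total (i + 1) m with h | h
  · obtain ⟨t, ht⟩ := flatten_prefix h
    rw [ht, List.getD_append]
    rw [len_flatten]
    nlinarith
  · obtain ⟨t, ht⟩ := flatten_prefix h
    rw [ht, List.getD_append]
    rw [len_flatten]
    exact hi

lemma sum_concat_sq (m : ℕ) :
    ∑ i ∈ Finset.range (m * m), concatSeq wseq i = -(m : ℤ) := by
  have h : ∀ i ∈ Finset.range (m * m), concatSeq wseq i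
      = (((List.range m).map wseq).flatten).getD i 0 :=
    fun i hi => concatSeq_eq m i (Finset.mem_range.1 hi)
  rw [Finset.sum_congr rfl h, ← sum_flatten m, ← sum_getD, len_flatten]

lemma abs_concat_le (i : ℕ) : |concatSeq wseq i| ≤ 1 := by
  rw [concatSeq_apply]
  apply abs_getD_le
  intro x hx
  rw [List.mem_flatten] at hx
  obtain ⟨l, hl, hxl⟩ := hx
  rw [List.mem_map] at hl
  obtain ⟨k, -, rfl⟩ := hl
  exact wseq_mem k x hxl

lemma sqrt_tendsto : Tendsto Nat.sqrt atTop atTop := by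
  apply Filter.tendsto_atTop_atTop.2
  intro b
  exact ⟨b * b, fun n h => Nat.le_sqrt.2 h⟩

lemma tendsto_concat_avg :
    Tendsto (fun N : ℕ => (∑ i ∈ Finset.range N, ((concatSeq wseq i : ℤ) : ℝ)) / N) atTop
      (nhds 0) := by
  apply squeeze_zero_norm' (a := fun N : ℕ => 3 / (Nat.sqrt N : ℝ))
  · filter_upwards [eventually_ge_atTop 1] with N hN
    set m : ℕ := Nat.sqrt N with hm
    have hm1 : 1 ≤ m := Nat.le_sqrt.2 (by omega)
    have hmN : m * m ≤ N := Nat.sqrt_le N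
    have hN2 : N ≤ m * m + 2 * m := by
      have := Nat.lt_succ_sqrt N
      rw [← hm] at this
      nlinarith
    have habs : |∑ i ∈ Finset.range N, concatSeq wseq i| ≤ 3 * (m : ℤ) := by
      have hsplit : ∑ i ∈ Finset.range N, concatSeq wseq i
          = (∑ i ∈ Finset.range (m * m), concatSeq wseq i)
            + ∑ i ∈ Finset.Ico (m * m) N, concatSeq wseq i := by
        rw [Finset.range_eq_Ico, Finset.range_eq_Ico]
        exact (Finset.sum_Ico_consecutive (concatSeq wseq) (Nat.zero_le _) hmN).symm
      rw [hsplit, sum_concat_sq]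
      have hrest : |∑ i ∈ Finset.Ico (m * m) N, concatSeq wseq i| ≤ 2 * (m : ℤ) := by
        calc |∑ i ∈ Finset.Ico (m * m) N, concatSeq wseq i|
            ≤ ∑ i ∈ Finset.Ico (m * m) N, |concatSeq wseq i| :=
              Finset.abs_sum_le_sum_abs _ _
          _ ≤ ∑ _i ∈ Finset.Ico (m * m) N, 1 :=
              Finset.sum_le_sum fun i _ => abs_concat_le i
          _ = ((N - m * m : ℕ) : ℤ) := by simp [Nat.card_Ico]
          _ ≤ 2 * (m : ℤ) := by
              have : N - m * m ≤ 2 * m := by omega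
              exact_mod_cast this
      calc |-(m:ℤ) + ∑ i ∈ Finset.Ico (m * m) N, concatSeq wseq i|
          ≤ |(-(m:ℤ))| + |∑ i ∈ Finset.Ico (m * m) N, concatSeq wseq i| := abs_add_le _ _
        _ ≤ (m : ℤ) + 2 * m := by
            rw [abs_neg, abs_of_nonneg (by positivity : (0:ℤ) ≤ (m:ℤ))]
            linarith [hrest]
        _ = 3 * (m : ℤ) := by ring
    have hm0 : (0:ℝ) < (m:ℝ) := by exact_mod_cast hm1
    have hN0 : (0:ℝ) < (N:ℝ) := by exact_mod_cast hN
    have habsR : |(∑ i ∈ Finset.range N, ((concatSeq wseq i : ℤ) : ℝ))| ≤ 3 * (m : ℝ) := by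
      exact_mod_cast habs
    rw [Real.norm_eq_abs, abs_div, abs_of_pos hN0]
    have hmmN : ((m : ℝ) * (m : ℝ)) ≤ (N : ℝ) := by exact_mod_cast hmN
    calc |(∑ i ∈ Finset.range N, ((concatSeq wseq i : ℤ) : ℝ))| / N
        ≤ (3 * (m:ℝ)) / N := by gcongr
      _ ≤ (3 * (m:ℝ)) / ((m:ℝ) * (m:ℝ)) := by gcongr
      _ = 3 / (m:ℝ) := by field_simp
  · exact (tendsto_const_div_atTop_nhds_zero_nat 3).comp sqrt_tendsto

/-- with `w_n = 1^n (-1)^{n+1}`, each periodic word `(w_n)^ω` has mean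
payoff `-1/(2n+1) < 0`, while the concatenation `w₀w₁w₂…` has mean payoff `0`, hence
belongs to `MP^{≥0}` although each `(w_n)^ω` does not. -/
theorem stmt14 :
    (∀ n : ℕ,
      mpVal (periodic (List.replicate n (1 : ℤ) ++ List.replicate (n + 1) (-1)))
        = -1 / (2 * (n : ℝ) + 1) ∧
      mpVal (periodic (List.replicate n (1 : ℤ) ++ List.replicate (n + 1) (-1))) < 0) ∧
    mpVal (concatSeq fun n => List.replicate n (1 : ℤ) ++ List.replicate (n + 1) (-1))
      = 0 ∧
    0 ≤ mpVal (concatSeq fun n =>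
      List.replicate n (1 : ℤ) ++ List.replicate (n + 1) (-1)) := by
  have hper : ∀ n : ℕ,
      mpVal (periodic (List.replicate n (1 : ℤ) ++ List.replicate (n + 1) (-1)))
        = -1 / (2 * (n : ℝ) + 1) := by
    intro n
    have h := tendsto_periodic_avg (wseq n)
      (by rw [wseq_length]; omega) (wseq_mem n)
    rw [wseq_sum, wseq_length] at h
    have := mpVal_eq_of_tendsto h
    rw [show (wseq n : List ℤ) = List.replicate n (1 : ℤ) ++ List.replicate (n + 1) (-1)
      from rfl] at this
    rw [this]
    push_cast
    ring
  have hconcat :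
      mpVal (concatSeq fun n => List.replicate n (1 : ℤ) ++ List.replicate (n + 1) (-1))
        = 0 := by
    have := mpVal_eq_of_tendsto tendsto_concat_avg
    exact this
  refine ⟨fun n => ⟨hper n, ?_⟩, hconcat, le_of_eq hconcat.symm⟩
  rw [hper n]
  apply div_neg_of_neg_of_pos
  · norm_num
  · positivity
end

section
/- The mean-payoff winning condition MP^{≥0} over C = {−1, 1} is not M-cycle-consistent for any finite skeleton M: for every skeleton M there exist a state m of M reachable from m_init, a finite word w reaching m, and an infinite sequence of cycles γ₁, γ₂, … on m, each of which is losing when repeated forever after w (i.e., MP(w γ_i^ω) < 0), but whose infinite concatenation satisfies MP(w γ₁ γ₂ …) ≥ 0. -/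
namespace Stmt15Aux

open Filter Finset

/-- All letters are `±1`. -/
def PM (l : List ℤ) : Prop := ∀ c ∈ l, c = 1 ∨ c = -1

lemma abs_sum_le {l : List ℤ} (h : PM l) : |l.sum| ≤ (l.length : ℤ) := by
  induction l with
  | nil => simp
  | cons c t ih =>
    have hc := h c (by simp)
    have ht : PM t := fun x hx => h x (by simp [hx])
    have h2 := ih ht
    have h3 : |c + t.sum| ≤ |c| + |t.sum| := abs_add_le _ _
    have hc1 : |c| = 1 := by rcases hc with rfl | rfl <;> simp
    simp only [List.sum_cons, List.length_cons]
    push_cast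
    omega

@[simp] lemma app_zero {c : ℤ} {u : List ℤ} {v : ℕ → ℤ} : app (c :: u) v 0 = c := rfl

@[simp] lemma app_succ {c : ℤ} {u : List ℤ} {v : ℕ → ℤ} {j : ℕ} :
    app (c :: u) v (j + 1) = app u v j := rfl

@[simp] lemma app_nil {v : ℕ → ℤ} : app ([] : List ℤ) v = v := rfl

lemma sum_app (u : List ℤ) (v : ℕ → ℤ) (t : ℕ) :
    ∑ i ∈ range (u.length + t), app u v i = u.sum + ∑ i ∈ range t, v i := by
  induction u with
  | nil => simp
  | cons c u ih =>
    have hlen : (c :: u).length + t = (u.length + t) + 1 := by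
      simp [List.length_cons]; omega
    rw [hlen, Finset.sum_range_succ']
    simp only [app_succ, app_zero, List.sum_cons]
    rw [ih]
    ring

lemma app_pm {u : List ℤ} {v : ℕ → ℤ} (hu : PM u) (hv : ∀ i, v i = 1 ∨ v i = -1) :
    ∀ i, app u v i = 1 ∨ app u v i = -1 := by
  induction u with
  | nil => simpa using hv
  | cons c u ih =>
    intro i
    cases i with
    | zero => simpa using hu c (by simp)
    | succ j =>
      exact ih (fun x hx => hu x (by simp [hx])) j

lemma periodic_pm {γ : List ℤ} (hγ : γ ≠ []) (h : PM γ) (i : ℕ) :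
    periodic γ i = 1 ∨ periodic γ i = -1 := by
  have hlen : 0 < γ.length := List.length_pos_iff.2 hγ
  have hi : i % γ.length < γ.length := Nat.mod_lt _ hlen
  unfold periodic
  rw [List.getD_eq_getElem _ _ hi]
  exact h _ (γ.getElem_mem hi)

lemma periodic_add_length (γ : List ℤ) (i : ℕ) :
    periodic γ (γ.length + i) = periodic γ i := by
  unfold periodic
  rw [Nat.add_mod_left]

lemma sum_range_getD (l : List ℤ) (t : ℕ) (h : t ≤ l.length) :
    ∑ i ∈ range t, l.getD i 0 = (l.take t).sum := by
  induction t with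
  | zero => simp
  | succ t ih =>
    have ht : t < l.length := by omega
    rw [Finset.sum_range_succ, ih (le_of_lt ht), List.sum_take_succ l t ht,
      List.getD_eq_getElem l _ ht]

lemma sum_periodic_low {γ : List ℤ} (t : ℕ) (h : t ≤ γ.length) :
    ∑ i ∈ range t, periodic γ i = (γ.take t).sum := by
  rw [← sum_range_getD γ t h]
  apply Finset.sum_congr rfl
  intro i hi
  have : i < γ.length := lt_of_lt_of_le (Finset.mem_range.1 hi) h
  unfold periodic
  rw [Nat.mod_eq_of_lt this]
  rfl

lemma sum_periodic_shift (γ : List ℤ) (t : ℕ) :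
    ∑ i ∈ range (γ.length + t), periodic γ i = γ.sum + ∑ i ∈ range t, periodic γ i := by
  rw [Finset.sum_range_add]
  congr 1
  · rw [sum_periodic_low γ.length le_rfl, List.take_length]
  · exact Finset.sum_congr rfl fun i _ => periodic_add_length γ i

lemma sum_periodic (γ : List ℤ) (c r : ℕ) :
    ∑ i ∈ range (c * γ.length + r), periodic γ i
      = (c : ℤ) * γ.sum + ∑ i ∈ range r, periodic γ i := by
  induction c with
  | zero => simp
  | succ c ih =>
    have : (c + 1) * γ.length + r = γ.length + (c * γ.length + r) := by ring
    rw [this, sum_periodic_shift, ih]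
    push_cast
    ring

lemma sum_pm_bounds {x : ℕ → ℤ} (hx : ∀ i, x i = 1 ∨ x i = -1) (N : ℕ) :
    -(N : ℤ) ≤ ∑ i ∈ range N, x i ∧ ∑ i ∈ range N, x i ≤ (N : ℤ) := by
  induction N with
  | zero => simp
  | succ N ih =>
    rw [Finset.sum_range_succ]
    rcases hx N with h | h <;> push_cast <;> omega

lemma avg_bounds {x : ℕ → ℤ} (hx : ∀ i, x i = 1 ∨ x i = -1) (N : ℕ) :
    -1 ≤ (∑ i ∈ range N, (x i : ℝ)) / N ∧ (∑ i ∈ range N, (x i : ℝ)) / N ≤ 1 := by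
  rcases Nat.eq_zero_or_pos N with rfl | hN
  · norm_num
  · have hN' : (0 : ℝ) < N := by exact_mod_cast hN
    obtain ⟨h1, h2⟩ := sum_pm_bounds hx N
    have hcast : (∑ i ∈ range N, (x i : ℝ)) = ((∑ i ∈ range N, x i : ℤ) : ℝ) := by
      push_cast; ring
    constructor
    · rw [hcast, le_div_iff₀ hN']
      have : (-(N:ℤ) : ℝ) ≤ ((∑ i ∈ range N, x i : ℤ) : ℝ) := by exact_mod_cast h1
      push_cast at this ⊢
      linarith
    · rw [hcast, div_le_one hN']
      exact_mod_cast h2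

/-- Key negative-mean-payoff lemma for eventually periodic words. -/
lemma mpVal_periodic_neg {u γ : List ℤ} (hu : PM u) (hγpm : PM γ) (hγ : γ ≠ [])
    (hsum : γ.sum ≤ -1) : mpVal (app u (periodic γ)) < 0 := by
  set L := γ.length with hL
  have hL1 : 1 ≤ L := List.length_pos_iff.2 hγ
  set q := u.length with hq
  have hxpm : ∀ i, app u (periodic γ) i = 1 ∨ app u (periodic γ) i = -1 :=
    app_pm hu (periodic_pm hγ hγpm)
  set N₀ : ℕ := 2 * q + 2 * L * q + 2 * L * L + 2 * L with hN₀
  have key : ∀ N, N₀ ≤ N →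
      (∑ i ∈ range N, ((app u (periodic γ) i : ℤ) : ℝ)) / N ≤ -1 / (2 * L) := by
    intro N hN
    have hqN : q ≤ N := by omega
    set t := N - q with ht
    have hNt : N = q + t := by omega
    -- integer sum computation
    have hsplit : ∑ i ∈ range N, app u (periodic γ) i
        = u.sum + ∑ i ∈ range t, periodic γ i := by
      rw [hNt]; exact sum_app u (periodic γ) t
    have hdm : (t / L) * L + t % L = t := by
      rw [Nat.mul_comm]; exact Nat.div_add_mod t L
    have hper : ∑ i ∈ range t, periodic γ i
        = ((t / L : ℕ) : ℤ) * γ.sum + (γ.take (t % L)).sum := by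
      conv_lhs => rw [← hdm]
      rw [sum_periodic, sum_periodic_low _ (le_of_lt (Nat.mod_lt _ (by omega)))]
    -- bounds
    have hbu : u.sum ≤ (q : ℤ) := le_trans (le_abs_self _) (abs_sum_le hu)
    have hbtake : (γ.take (t % L)).sum ≤ (L : ℤ) := by
      have hpm : PM (γ.take (t % L)) := fun c hc => hγpm c (List.mem_of_mem_take hc)
      have h1 := le_trans (le_abs_self _) (abs_sum_le hpm)
      have hlen : (γ.take (t % L)).length ≤ L := by
        rw [List.length_take]; omega
      exact le_trans h1 (by exact_mod_cast hlen)
    have hdiv : (L : ℤ) * ((t / L : ℕ) : ℤ) ≥ (t : ℤ) - L + 1 := by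
      have h1 : L * (t / L) + t % L = t := Nat.div_add_mod t L
      have h2 : t % L < L := Nat.mod_lt _ (by omega)
      have h1' : (L : ℤ) * ((t / L : ℕ) : ℤ) + ((t % L : ℕ) : ℤ) = (t : ℤ) := by
        exact_mod_cast h1
      have h2' : ((t % L : ℕ) : ℤ) < (L : ℤ) := by exact_mod_cast h2
      linarith
    have hmul : ((t / L : ℕ) : ℤ) * γ.sum ≤ -((t / L : ℕ) : ℤ) := by
      have h0 : (0 : ℤ) ≤ ((t / L : ℕ) : ℤ) := Int.natCast_nonneg _
      nlinarith
    -- main integer estimate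
    have hest : 2 * (L : ℤ) * (∑ i ∈ range N, app u (periodic γ) i) ≤ -(N : ℤ) := by
      rw [hsplit, hper]
      have hL0 : (0 : ℤ) < L := by exact_mod_cast hL1
      have hNcast : (N : ℤ) = (q : ℤ) + t := by exact_mod_cast hNt
      have hN0cast : (2 * q + 2 * L * q + 2 * L * L + 2 * L : ℤ) ≤ (N : ℤ) := by
        exact_mod_cast hN
      nlinarith [hmul, hbtake, hbu, hdiv]
    -- convert to real average
    have hNpos : (0 : ℝ) < N := by
      have : 0 < N := by omega
      exact_mod_cast this
    have hcast : (∑ i ∈ range N, ((app u (periodic γ) i : ℤ) : ℝ))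
        = ((∑ i ∈ range N, app u (periodic γ) i : ℤ) : ℝ) := by push_cast; ring
    rw [hcast, div_le_div_iff₀ hNpos (by positivity)]
    have : ((2 * (L : ℤ) * (∑ i ∈ range N, app u (periodic γ) i) : ℤ) : ℝ)
        ≤ ((-(N : ℤ) : ℤ) : ℝ) := by exact_mod_cast hest
    push_cast at this ⊢
    nlinarith
  have hbound : mpVal (app u (periodic γ)) ≤ -1 / (2 * L) := by
    have hcb : Filter.IsCoboundedUnder (· ≤ ·) Filter.atTop
        (fun N : ℕ => (∑ i ∈ range N, ((app u (periodic γ) i : ℤ) : ℝ)) / N) :=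
      isCoboundedUnder_le_of_le _ fun n => (avg_bounds hxpm n).1
    exact Filter.limsup_le_of_le hcb (eventually_atTop.2 ⟨N₀, key⟩)
  have hneg : (-1 : ℝ) / (2 * L) < 0 := by
    apply div_neg_of_neg_of_pos (by norm_num)
    have : (0 : ℝ) < L := by exact_mod_cast hL1
    linarith
  exact lt_of_le_of_lt hbound hneg

lemma mpVal_nonneg {x : ℕ → ℤ} (hx : ∀ i, x i = 1 ∨ x i = -1)
    (h : ∀ k, ∃ N, k ≤ N ∧ 0 ≤ ∑ i ∈ range N, x i) : 0 ≤ mpVal x := by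
  apply Filter.le_limsup_of_frequently_le
  · rw [Filter.frequently_atTop]
    intro a
    obtain ⟨N, hN, hS⟩ := h a
    refine ⟨N, hN, ?_⟩
    rcases Nat.eq_zero_or_pos N with rfl | hNpos
    · norm_num
    · have hN' : (0 : ℝ) < N := by exact_mod_cast hNpos
      apply div_nonneg _ (le_of_lt hN')
      have : ((0 : ℤ) : ℝ) ≤ ((∑ i ∈ range N, x i : ℤ) : ℝ) := by exact_mod_cast hS
      push_cast at this ⊢
      linarith
  · exact Filter.isBoundedUnder_of ⟨1, fun n => (avg_bounds hx n).2⟩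

/-! ### Automaton part -/

lemma updStar_append {M : Type*} (upd : M → ℤ → M) (m : M) (u v : List ℤ) :
    updStar upd m (u ++ v) = updStar upd (updStar upd m u) v :=
  List.foldl_append

lemma updStar_flatten_replicate {M : Type*} (upd : M → ℤ → M) (u : List ℤ) :
    ∀ (k : ℕ) (m : M), updStar upd m ((List.replicate k u).flatten)
      = (fun s => updStar upd s u)^[k] m := by
  intro k
  induction k with
  | zero => intro m; simp [updStar]
  | succ k ih =>
    intro m
    rw [List.replicate_succ, List.flatten_cons, updStar_append,
      Function.iterate_succ_apply]
    first
      | exact ih _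
      | skip

lemma exists_iter_cycle {M : Type*} [Finite M] (f : M → M) (x : M) :
    ∃ (a e : ℕ), 1 ≤ e ∧ f^[e] (f^[a] x) = f^[a] x := by
  obtain ⟨i, j, hne, heq⟩ := Finite.exists_ne_map_eq_of_infinite (fun k : ℕ => f^[k] x)
  rcases Nat.lt_or_gt_of_ne hne with h | h
  · refine ⟨i, j - i, by omega, ?_⟩
    rw [← Function.iterate_add_apply, show j - i + i = j by omega]
    exact heq.symm
  · refine ⟨j, i - j, by omega, ?_⟩
    rw [← Function.iterate_add_apply, show i - j + j = i by omega]
    exact heq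

/-- The basic word `1^n (-1)^(n+1)`. -/
def wn (n : ℕ) : List ℤ := List.replicate n 1 ++ List.replicate (n + 1) (-1)

lemma wn_pm (n : ℕ) : PM (wn n) := by
  intro c hc
  rcases List.mem_append.1 hc with h | h
  · left; exact List.eq_of_mem_replicate h
  · right; exact List.eq_of_mem_replicate h

lemma wn_length (n : ℕ) : (wn n).length = 2 * n + 1 := by
  simp [wn]; omega

lemma wn_sum (n : ℕ) : (wn n).sum = -1 := by
  simp [wn, List.sum_replicate]

/-- The cycle block: `e` copies of `wn n`. -/
def block (n e : ℕ) : List ℤ := (List.replicate e (wn n)).flatten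

lemma block_pm (n e : ℕ) : PM (block n e) := by
  intro c hc
  obtain ⟨l, hl, hcl⟩ := List.mem_flatten.1 hc
  exact wn_pm n c (List.eq_of_mem_replicate hl ▸ hcl)

lemma block_length (n e : ℕ) : (block n e).length = e * (2 * n + 1) := by
  simp [block, List.length_flatten, List.map_replicate, List.sum_replicate, wn_length,
    smul_eq_mul]

lemma block_sum (n e : ℕ) : (block n e).sum = -(e : ℤ) := by
  simp [block, List.sum_flatten, List.map_replicate, List.sum_replicate, wn_sum,
    smul_eq_mul]

lemma block_ne_nil (n e : ℕ) (he : 1 ≤ e) : block n e ≠ [] := by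
  intro h
  have := block_length n e
  rw [h] at this
  simp at this
  omega

lemma block_take (n e : ℕ) (he : 1 ≤ e) :
    (block n e).take n = List.replicate n (1 : ℤ) := by
  obtain ⟨e', rfl⟩ : ∃ e', e = e' + 1 := ⟨e - 1, by omega⟩
  have : block n (e' + 1) = List.replicate n (1 : ℤ) ++
      (List.replicate (n + 1) (-1) ++ (List.replicate e' (wn n)).flatten) := by
    rw [block, List.replicate_succ, List.flatten_cons, wn, List.append_assoc]
  rw [this]
  exact List.take_left' (by simp)

lemma block_take_sum (n e : ℕ) (he : 1 ≤ e) :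
    ((block n e).take n).sum = (n : ℤ) := by
  rw [block_take n e he, List.sum_replicate]
  simp

/-! ### concatSeq lemmas -/

lemma default_int : (default : ℤ) = 0 := rfl

lemma flatten_range_prefix (ws : ℕ → List ℤ) {K K' : ℕ} (h : K ≤ K') :
    ((List.range K).map ws).flatten <+: ((List.range K').map ws).flatten := by
  obtain ⟨d, rfl⟩ : ∃ d, K' = K + d := ⟨K' - K, by omega⟩
  clear h
  induction d with
  | zero => simp
  | succ d ih =>
    refine ih.trans ?_
    rw [show K + (d + 1) = (K + d) + 1 from rfl, List.range_succ, List.map_append,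
      List.flatten_append]
    exact List.prefix_append _ _

lemma length_flatten_range (ws : ℕ → List ℤ) (K : ℕ) :
    (((List.range K).map ws).flatten).length = ∑ j ∈ range K, (ws j).length := by
  induction K with
  | zero => simp
  | succ K ih =>
    rw [List.range_succ, List.map_append, List.flatten_append, List.length_append, ih,
      Finset.sum_range_succ]
    simp

lemma sum_flatten_range (ws : ℕ → List ℤ) (K : ℕ) :
    (((List.range K).map ws).flatten).sum = ∑ j ∈ range K, (ws j).sum := by
  induction K with
  | zero => simp
  | succ K ih =>
    rw [List.range_succ, List.map_append, List.flatten_append, List.sum_append, ih,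
      Finset.sum_range_succ]
    simp

lemma le_length_flatten_range (ws : ℕ → List ℤ) (hws : ∀ k, ws k ≠ []) (K : ℕ) :
    K ≤ (((List.range K).map ws).flatten).length := by
  rw [length_flatten_range]
  calc K = ∑ _j ∈ range K, 1 := by simp
  _ ≤ ∑ j ∈ range K, (ws j).length :=
    Finset.sum_le_sum fun j _ => List.length_pos_iff.2 (hws j)

lemma concatSeq_eq_getD (ws : ℕ → List ℤ) (hws : ∀ k, ws k ≠ []) (K i : ℕ)
    (hi : i < (((List.range K).map ws).flatten).length) :
    concatSeq ws i = (((List.range K).map ws).flatten).getD i default := by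
  unfold concatSeq
  have h1 : i < (((List.range (i + 1)).map ws).flatten).length :=
    lt_of_lt_of_le (by omega) (le_length_flatten_range ws hws (i + 1))
  rcases le_total (i + 1) K with h | h
  · have hp := flatten_range_prefix ws h
    rw [List.getD_eq_getElem _ _ h1, List.getD_eq_getElem _ _ hi]
    exact hp.getElem h1
  · have hp := flatten_range_prefix ws h
    rw [List.getD_eq_getElem _ _ h1, List.getD_eq_getElem _ _ hi]
    exact (hp.getElem hi).symm

lemma concatSeq_pm {ws : ℕ → List ℤ} (hne : ∀ k, ws k ≠ []) (hpm : ∀ k, PM (ws k))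
    (i : ℕ) : concatSeq ws i = 1 ∨ concatSeq ws i = -1 := by
  have h1 : i < (((List.range (i + 1)).map ws).flatten).length :=
    lt_of_lt_of_le (by omega) (le_length_flatten_range ws hne (i + 1))
  rw [concatSeq_eq_getD ws hne (i + 1) i h1, List.getD_eq_getElem _ _ h1]
  have hmem := (((List.range (i + 1)).map ws).flatten).getElem_mem h1
  obtain ⟨l, hl, hcl⟩ := List.mem_flatten.1 hmem
  obtain ⟨j, _, rfl⟩ := List.mem_map.1 hl
  exact hpm j _ hcl

lemma sum_concatSeq (ws : ℕ → List ℤ) (hws : ∀ k, ws k ≠ []) (t K : ℕ)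
    (hK : t ≤ (((List.range K).map ws).flatten).length) :
    ∑ i ∈ range t, concatSeq ws i = ((((List.range K).map ws).flatten).take t).sum := by
  rw [← sum_range_getD _ t hK]
  refine Finset.sum_congr rfl fun i hi => ?_
  rw [concatSeq_eq_getD ws hws K i (lt_of_lt_of_le (Finset.mem_range.1 hi) hK), default_int]

end Stmt15Aux

/-- the mean-payoff condition `MP^{≥0}` over colors `{-1, 1}` is not
`M`-cycle-consistent for any finite skeleton `M`: there are a reachable state `m`, a word
`w` reaching `m`, and infinitely many cycles on `m`, each losing when repeated forever
after `w`, whose infinite concatenation is winning. -/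
theorem stmt15 {M : Type*} [Finite M] (upd : M → ℤ → M) (init : M) :
    ∃ (m : M) (w : List ℤ) (ws : ℕ → List ℤ),
      (∀ c ∈ w, c = 1 ∨ c = -1) ∧ updStar upd init w = m ∧
      (∀ k, ws k ≠ [] ∧ (∀ c ∈ ws k, c = 1 ∨ c = -1) ∧
        updStar upd m (ws k) = m ∧ mpVal (app w (periodic (ws k))) < 0) ∧
      0 ≤ mpVal (app w (concatSeq ws)) := by
  classical
  open Stmt15Aux Finset in
  -- Step 1: for each n, a state with a cycle made of copies of `wn n`
  have h1 : ∀ n : ℕ, ∃ (mn : M) (a e : ℕ), 1 ≤ e ∧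
      updStar upd init (block n a) = mn ∧ updStar upd mn (block n e) = mn := by
    intro n
    obtain ⟨a, e, he, hcy⟩ := exists_iter_cycle (fun s => updStar upd s (wn n)) init
    refine ⟨(fun s => updStar upd s (wn n))^[a] init, a, e, he, ?_, ?_⟩
    · exact updStar_flatten_replicate upd (wn n) a init
    · rw [show block n e = (List.replicate e (wn n)).flatten from rfl,
        updStar_flatten_replicate upd (wn n) e]
      exact hcy
  choose mf af ef hef hreach hcyc using h1
  -- Step 2: pigeonhole
  obtain ⟨m, hm⟩ := Finite.exists_infinite_fiber mf
  have hS : (mf ⁻¹' {m}).Infinite := Set.infinite_coe_iff.mp hm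
  have hpick : ∀ B : ℕ, ∃ n, mf n = m ∧ B < n := by
    intro B
    obtain ⟨b, hb, hlt⟩ := hS.exists_gt B
    exact ⟨b, hb, hlt⟩
  choose pick hpick1 hpick2 using hpick
  -- the prefix word
  set n₀ : ℕ := pick 0 with hn₀
  set w : List ℤ := block n₀ (af n₀) with hwdef
  have hwreach : updStar upd init w = m := by rw [hwdef, hreach]; exact hpick1 0
  set q : ℕ := w.length with hqdef
  -- Step 3: recursive choice of cycle indices
  set blen : ℕ → ℕ := fun n => (block n (ef n)).length with hblen
  set p : ℕ → ℕ × ℕ := fun k => Nat.rec (pick q, q + blen (pick q))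
    (fun _ prev => (pick prev.2, prev.2 + blen (pick prev.2))) k with hp
  set ns : ℕ → ℕ := fun k => (p k).1 with hns
  set wseq : ℕ → List ℤ := fun k => block (ns k) (ef (ns k)) with hwseq
  have hp0 : p 0 = (pick q, q + blen (pick q)) := rfl
  have hpsucc : ∀ k, p (k + 1) = (pick (p k).2, (p k).2 + blen (pick (p k).2)) :=
    fun k => rfl
  have hns0 : ns 0 = pick q := by
    show (p 0).1 = pick q
    rw [hp0]
  have hnssucc : ∀ k, ns (k + 1) = pick (p k).2 := by
    intro k
    show (p (k + 1)).1 = pick (p k).2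
    rw [hpsucc]
  have hmem : ∀ k, mf (ns k) = m := by
    intro k
    cases k with
    | zero => rw [hns0]; exact hpick1 q
    | succ k => rw [hnssucc]; exact hpick1 _
  have hwseqlen : ∀ k, (wseq k).length = blen (ns k) := fun k => rfl
  have hlen2 : ∀ k, (p k).2 = q + ∑ j ∈ range (k + 1), (wseq j).length := by
    intro k
    induction k with
    | zero =>
      simp only [hp0, zero_add, Finset.sum_range_one]
      rw [hwseqlen 0, hns0]
    | succ k ih =>
      simp only [hpsucc, Finset.sum_range_succ]
      rw [hwseqlen (k + 1), hnssucc k, ih]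
      have hsum : ∑ j ∈ range (k + 1), (wseq j).length
          = ∑ j ∈ range k, (wseq j).length + (wseq k).length :=
        Finset.sum_range_succ _ _
      omega
  have hgt : ∀ k, q + ∑ j ∈ range k, (wseq j).length < ns k := by
    intro k
    cases k with
    | zero => simpa [hns0] using hpick2 q
    | succ k =>
      rw [hnssucc]
      have h' : q + ∑ j ∈ range (k + 1), (wseq j).length = (p k).2 := (hlen2 k).symm
      rw [h']
      exact hpick2 _
  have hne : ∀ k, wseq k ≠ [] := fun k => block_ne_nil _ _ (hef _)
  have hpm : ∀ k, PM (wseq k) := fun k => block_pm _ _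
  have hwpm : PM w := block_pm _ _
  refine ⟨m, w, wseq, hwpm, hwreach, fun k => ⟨hne k, hpm k, ?_, ?_⟩, ?_⟩
  · -- cycle condition
    have := hcyc (ns k)
    rwa [hmem k] at this
  · -- each cycle is losing
    apply mpVal_periodic_neg hwpm (hpm k) (hne k)
    show (block (ns k) (ef (ns k))).sum ≤ -1
    rw [block_sum]
    have := hef (ns k)
    omega
  · -- the concatenation is winning
    apply mpVal_nonneg (app_pm hwpm (concatSeq_pm hne hpm))
    intro k
    set t : ℕ := (∑ j ∈ range k, (wseq j).length) + ns k with htdef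
    refine ⟨q + t, ?_, ?_⟩
    · -- q + t is large
      have hk : k ≤ ∑ j ∈ range k, (wseq j).length := by
        calc k = ∑ _j ∈ range k, 1 := by simp
        _ ≤ ∑ j ∈ range k, (wseq j).length :=
          Finset.sum_le_sum fun j _ => List.length_pos_iff.2 (hne j)
      omega
    · -- the partial sum at q + t is nonnegative
      have hnsle : ns k ≤ (wseq k).length := by
        show ns k ≤ (block (ns k) (ef (ns k))).length
        rw [block_length]
        have := hef (ns k)
        nlinarith
      have hKlen : t ≤ (((List.range (k + 1)).map wseq).flatten).length := by
        rw [length_flatten_range, Finset.sum_range_succ]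
        omega
      rw [sum_app, sum_concatSeq wseq hne t (k + 1) hKlen]
      -- decompose the take
      have hsplit : ((List.range (k + 1)).map wseq).flatten
          = ((List.range k).map wseq).flatten ++ wseq k := by
        rw [List.range_succ, List.map_append, List.flatten_append]
        simp
      have hlenpre : (((List.range k).map wseq).flatten).length
          = ∑ j ∈ range k, (wseq j).length := length_flatten_range _ _
      have htake : (((List.range (k + 1)).map wseq).flatten).take t
          = ((List.range k).map wseq).flatten ++ (wseq k).take (ns k) := by
        rw [hsplit, show t = (((List.range k).map wseq).flatten).length + ns k by
          rw [hlenpre], List.take_append]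
        simp
      rw [htake, List.sum_append, sum_flatten_range]
      have htksum : ((wseq k).take (ns k)).sum = (ns k : ℤ) := by
        show ((block (ns k) (ef (ns k))).take (ns k)).sum = (ns k : ℤ)
        exact block_take_sum _ _ (hef _)
      rw [htksum]
      -- now the estimate
      have hwsum : -(q : ℤ) ≤ w.sum := by
        have := abs_sum_le hwpm
        rw [← hqdef] at this
        have := neg_abs_le w.sum
        omega
      have hsums : -((∑ j ∈ range k, (wseq j).length : ℕ) : ℤ)
          ≤ ∑ j ∈ range k, (wseq j).sum := by
        push_cast
        rw [← Finset.sum_neg_distrib]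
        refine Finset.sum_le_sum fun j _ => ?_
        have h1 := abs_sum_le (hpm j)
        have h2 := neg_abs_le (wseq j).sum
        omega
      have hgtk := hgt k
      have hgtk' : ((q : ℤ) + ((∑ j ∈ range k, (wseq j).length : ℕ) : ℤ)) < (ns k : ℤ) := by
        exact_mod_cast hgtk
      omega
end

section
/- Let λ ∈ (0,1) ∩ ℚ, k ∈ ℕ with k < 1/λ − 1, and C = [−k, k] ∩ ℤ with k ≥ 1. Then for any finite word of the form w = 0^j c with c ≥ 1 (j ≥ 0), every infinite continuation is winning for DS_λ^{≥0}: for all w' ∈ C^ω, DS_λ(w w') ≥ 0. Symmetrically, if c ≤ −1, every continuation is losing. Consequently the right congruence of DS_λ^{≥0} has exactly three equivalence classes: 0*, 0*c C* with c ≥ 1, and 0*c C* with c ≤ −1. -/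
/-- Discounted sum of an infinite word of integer colors. -/
noncomputable def dsInfZ (l : ℚ) (w : ℕ → ℤ) : ℝ :=
  ∑' i : ℕ, (l : ℝ) ^ i * (w i : ℝ)

/-- Two finite words over `[-k, k] ∩ ℤ` are right-congruent for `DS_λ^{≥0}` if they have
the same winning continuations. -/
def dsEqv (l : ℚ) (k : ℕ) (w₁ w₂ : List ℤ) : Prop :=
  ∀ w' : ℕ → ℤ, (∀ i, -(k : ℤ) ≤ w' i ∧ w' i ≤ k) →
    (0 ≤ dsInfZ l (app w₁ w') ↔ 0 ≤ dsInfZ l (app w₂ w'))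

section Aux

variable {l : ℚ} {k : ℕ}

lemma app_bound {u : List ℤ} {w' : ℕ → ℤ} (hu : ∀ c ∈ u, -(k:ℤ) ≤ c ∧ c ≤ k)
    (hw : ∀ i, -(k:ℤ) ≤ w' i ∧ w' i ≤ k) : ∀ i, -(k:ℤ) ≤ app u w' i ∧ app u w' i ≤ k := by
  induction u with
  | nil => exact hw
  | cons c u ih =>
    intro i
    cases i with
    | zero => exact hu c (by simp)
    | succ j => exact ih (fun d hd => hu d (by simp [hd])) j

lemma summable_ds (h0 : 0 < l) (h1 : l < 1) {w : ℕ → ℤ}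
    (hw : ∀ i, -(k:ℤ) ≤ w i ∧ w i ≤ k) : Summable (fun i => (l:ℝ)^i * (w i : ℝ)) := by
  have hl0 : (0:ℝ) ≤ l := by exact_mod_cast h0.le
  have hl1 : (l:ℝ) < 1 := by exact_mod_cast h1
  have hg : Summable (fun i : ℕ => (k:ℝ) * (l:ℝ)^i) :=
    (summable_geometric_of_lt_one hl0 hl1).mul_left _
  apply Summable.of_norm_bounded hg
  intro i
  rw [norm_mul]
  have h1' : ‖(l:ℝ)^i‖ = (l:ℝ)^i := by
    rw [Real.norm_eq_abs, abs_of_nonneg (pow_nonneg hl0 i)]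
  have h2' : ‖((w i : ℤ):ℝ)‖ ≤ (k:ℝ) := by
    rw [Real.norm_eq_abs, abs_le]
    constructor
    · exact_mod_cast (hw i).1
    · exact_mod_cast (hw i).2
  rw [h1', mul_comm ((k:ℝ)) _]
  exact mul_le_mul_of_nonneg_left h2' (pow_nonneg hl0 i)

lemma ds_bounds (h0 : 0 < l) (h1 : l < 1) {w : ℕ → ℤ}
    (hw : ∀ i, -(k:ℤ) ≤ w i ∧ w i ≤ k) :
    -((k:ℝ) / (1 - l)) ≤ dsInfZ l w ∧ dsInfZ l w ≤ (k:ℝ) / (1 - l) := by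
  have hl0 : (0:ℝ) ≤ l := by exact_mod_cast h0.le
  have hl1 : (l:ℝ) < 1 := by exact_mod_cast h1
  have hgeo : Summable (fun i : ℕ => (l:ℝ)^i) := summable_geometric_of_lt_one hl0 hl1
  have hs := summable_ds (k := k) h0 h1 hw
  have htg : ∑' i : ℕ, (k:ℝ) * (l:ℝ)^i = (k:ℝ) / (1 - l) := by
    rw [tsum_mul_left, tsum_geometric_of_lt_one hl0 hl1]
    ring
  constructor
  · have : -((k:ℝ)/(1-l)) = ∑' i : ℕ, (-(k:ℝ)) * (l:ℝ)^i := by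
      rw [tsum_mul_left, tsum_geometric_of_lt_one hl0 hl1]; ring
    rw [this]
    apply Summable.tsum_le_tsum _ (hgeo.mul_left _) hs
    intro i
    rw [mul_comm ((l:ℝ)^i)]
    apply mul_le_mul_of_nonneg_right _ (pow_nonneg hl0 i)
    exact_mod_cast (hw i).1
  · rw [← htg]
    apply Summable.tsum_le_tsum _ hs (hgeo.mul_left _)
    intro i
    rw [mul_comm (_:ℝ) ((l:ℝ)^i)]
    apply mul_le_mul_of_nonneg_left _ (pow_nonneg hl0 i)
    exact_mod_cast (hw i).2

lemma ds_shift (h0 : 0 < l) (h1 : l < 1) {w : ℕ → ℤ}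
    (hw : ∀ i, -(k:ℤ) ≤ w i ∧ w i ≤ k) :
    dsInfZ l w = (w 0 : ℝ) + l * dsInfZ l (fun i => w (i+1)) := by
  have hs := summable_ds (k := k) h0 h1 hw
  unfold dsInfZ
  rw [Summable.tsum_eq_zero_add hs]
  simp only [pow_zero, one_mul]
  congr 1
  rw [← tsum_mul_left]
  congr 1
  funext i
  ring

lemma ds_cons (h0 : 0 < l) (h1 : l < 1) (c : ℤ) {u : List ℤ} {w' : ℕ → ℤ}
    (hc : -(k:ℤ) ≤ c ∧ c ≤ k) (hu : ∀ d ∈ u, -(k:ℤ) ≤ d ∧ d ≤ k)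
    (hw : ∀ i, -(k:ℤ) ≤ w' i ∧ w' i ≤ k) :
    dsInfZ l (app (c :: u) w') = (c:ℝ) + l * dsInfZ l (app u w') := by
  have hb : ∀ i, -(k:ℤ) ≤ app (c::u) w' i ∧ app (c::u) w' i ≤ k := by
    apply app_bound _ hw
    intro d hd
    rcases List.mem_cons.mp hd with h | h
    · exact h ▸ hc
    · exact hu d h
  have := ds_shift (k := k) h0 h1 hb
  exact this

lemma ds_rep (h0 : 0 < l) (h1 : l < 1) (j : ℕ) (c : ℤ) {w' : ℕ → ℤ}
    (hc : -(k:ℤ) ≤ c ∧ c ≤ k) (hw : ∀ i, -(k:ℤ) ≤ w' i ∧ w' i ≤ k) :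
    dsInfZ l (app (List.replicate j 0 ++ [c]) w')
      = (l:ℝ)^j * ((c:ℝ) + l * dsInfZ l w') := by
  induction j with
  | zero =>
    simp only [List.replicate_zero, List.nil_append, pow_zero, one_mul]
    exact ds_cons (k := k) h0 h1 c hc (by simp) hw
  | succ j ih =>
    have hrep : List.replicate (j+1) 0 ++ [c] = (0:ℤ) :: (List.replicate j 0 ++ [c]) := by
      simp [List.replicate_succ]
    rw [hrep, ds_cons (k := k) h0 h1 0 (by omega) ?hb hw, ih]
    · push_cast; ring
    case hb =>
      intro d hd
      rcases List.mem_append.mp hd with h | h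
      · have := List.eq_of_mem_replicate h; omega
      · simp at h; omega

end Aux


/-- if `k < 1/λ - 1`, then after a word `0^j c` with `c ≥ 1` every
continuation is winning for `DS_λ^{≥0}`, after `0^j c` with `c ≤ -1` every continuation
is losing, and the right congruence of `DS_λ^{≥0}` over `[-k, k] ∩ ℤ` has exactly three
equivalence classes, represented by `ε`, `1` and `-1`. -/
theorem stmt17 (l : ℚ) (h0 : 0 < l) (h1 : l < 1) (k : ℕ) (hk1 : 1 ≤ k)
    (hk : (k : ℚ) < 1 / l - 1) :
    (∀ (j : ℕ) (c : ℤ), 1 ≤ c → c ≤ (k : ℤ) → ∀ w' : ℕ → ℤ,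
        (∀ i, -(k : ℤ) ≤ w' i ∧ w' i ≤ k) →
        0 ≤ dsInfZ l (app (List.replicate j 0 ++ [c]) w')) ∧
    (∀ (j : ℕ) (c : ℤ), c ≤ -1 → -(k : ℤ) ≤ c → ∀ w' : ℕ → ℤ,
        (∀ i, -(k : ℤ) ≤ w' i ∧ w' i ≤ k) →
        dsInfZ l (app (List.replicate j 0 ++ [c]) w') < 0) ∧
    (∀ w : List ℤ, (∀ c ∈ w, -(k : ℤ) ≤ c ∧ c ≤ k) →
        dsEqv l k w [] ∨ dsEqv l k w [1] ∨ dsEqv l k w [-1]) ∧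
    (¬ dsEqv l k [] [1] ∧ ¬ dsEqv l k [] [-1] ∧ ¬ dsEqv l k [1] [-1]) := by
  have hl0 : (0:ℝ) < l := by exact_mod_cast h0
  have hl1 : (l:ℝ) < 1 := by exact_mod_cast h1
  have hlk : (l:ℝ) * k < 1 - l := by
    have : (l:ℚ) * k < 1 - l := by
      have h := mul_lt_mul_of_pos_left hk h0
      rw [mul_sub, mul_one_div, div_self h0.ne'] at h
      linarith
    exact_mod_cast this
  have h1l : (0:ℝ) < 1 - l := by linarith
  -- core positivity: c ≥ 1 bounded continuation ⇒ c + l * ds > 0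
  have keyPos : ∀ (c : ℤ), 1 ≤ c → ∀ w' : ℕ → ℤ,
      (∀ i, -(k : ℤ) ≤ w' i ∧ w' i ≤ k) → 0 < (c:ℝ) + l * dsInfZ l w' := by
    intro c hc w' hw
    have hb := (ds_bounds (k := k) h0 h1 hw).1
    have hc' : (1:ℝ) ≤ (c:ℝ) := by exact_mod_cast hc
    have : (l:ℝ) * (k / (1 - l)) < 1 := by
      rw [mul_div_assoc'] at *
      exact (div_lt_one h1l).mpr hlk
    nlinarith [hl0.le]
  have keyNeg : ∀ (c : ℤ), c ≤ -1 → ∀ w' : ℕ → ℤ,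
      (∀ i, -(k : ℤ) ≤ w' i ∧ w' i ≤ k) → (c:ℝ) + l * dsInfZ l w' < 0 := by
    intro c hc w' hw
    have hb := (ds_bounds (k := k) h0 h1 hw).2
    have hc' : (c:ℝ) ≤ -1 := by exact_mod_cast hc
    have : (l:ℝ) * (k / (1 - l)) < 1 := by
      rw [mul_div_assoc'] at *
      exact (div_lt_one h1l).mpr hlk
    nlinarith [hl0.le]
  have part1 : ∀ (j : ℕ) (c : ℤ), 1 ≤ c → c ≤ (k : ℤ) → ∀ w' : ℕ → ℤ,
      (∀ i, -(k : ℤ) ≤ w' i ∧ w' i ≤ k) →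
      0 ≤ dsInfZ l (app (List.replicate j 0 ++ [c]) w') := by
    intro j c hc1 hck w' hw
    rw [ds_rep (k := k) h0 h1 j c ⟨by omega, hck⟩ hw]
    exact le_of_lt (mul_pos (pow_pos hl0 j) (keyPos c hc1 w' hw))
  have part2 : ∀ (j : ℕ) (c : ℤ), c ≤ -1 → -(k : ℤ) ≤ c → ∀ w' : ℕ → ℤ,
      (∀ i, -(k : ℤ) ≤ w' i ∧ w' i ≤ k) →
      dsInfZ l (app (List.replicate j 0 ++ [c]) w') < 0 := by
    intro j c hc1 hck w' hw
    rw [ds_rep (k := k) h0 h1 j c ⟨hck, by omega⟩ hw]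
    exact mul_neg_of_pos_of_neg (pow_pos hl0 j) (keyNeg c hc1 w' hw)
  refine ⟨part1, part2, ?_, ?_, ?_, ?_⟩
  · -- three classes
    intro w hwb
    induction w with
    | nil => exact Or.inl (fun w' hw => Iff.rfl)
    | cons c u ih =>
      have hck : -(k:ℤ) ≤ c ∧ c ≤ k := hwb c (by simp)
      have hub : ∀ d ∈ u, -(k:ℤ) ≤ d ∧ d ≤ k := fun d hd => hwb d (by simp [hd])
      rcases lt_trichotomy c 0 with hc | hc | hc
      · -- c ≤ -1 : always losing, eqv [-1]
        refine Or.inr (Or.inr (fun w' hw => ?_))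
        have hA : dsInfZ l (app (c :: u) w') < 0 := by
          have huw := app_bound (k := k) hub hw
          have := part2 0 c (by omega) hck.1 (app u w') huw
          exact this
        have hB : dsInfZ l (app [-1] w') < 0 := by
          have := part2 0 (-1) le_rfl (by omega) w' hw
          simpa using this
        constructor
        · intro h; linarith
        · intro h; linarith
      · -- c = 0 : reduce to u
        subst hc
        have hcons := fun (w' : ℕ → ℤ) (hw : ∀ i, -(k:ℤ) ≤ w' i ∧ w' i ≤ k) =>
          ds_cons (k := k) h0 h1 0 (by omega) hub hw
        have step : ∀ (w' : ℕ → ℤ) (hw : ∀ i, -(k:ℤ) ≤ w' i ∧ w' i ≤ k),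
            (0 ≤ dsInfZ l (app ((0:ℤ) :: u) w') ↔ 0 ≤ dsInfZ l (app u w')) := by
          intro w' hw
          rw [hcons w' hw]
          push_cast
          rw [zero_add]
          constructor
          · intro h; nlinarith
          · intro h; positivity
        rcases ih hub with h | h | h
        · exact Or.inl (fun w' hw => (step w' hw).trans (h w' hw))
        · exact Or.inr (Or.inl (fun w' hw => (step w' hw).trans (h w' hw)))
        · exact Or.inr (Or.inr (fun w' hw => (step w' hw).trans (h w' hw)))
      · -- c ≥ 1 : always winning, eqv [1]
        refine Or.inr (Or.inl (fun w' hw => ?_))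
        have hA : 0 ≤ dsInfZ l (app (c :: u) w') := by
          have huw := app_bound (k := k) hub hw
          have := part1 0 c (by omega) hck.2 (app u w') huw
          exact this
        have hB : 0 ≤ dsInfZ l (app [1] w') := by
          have := part1 0 1 le_rfl (by exact_mod_cast hk1) w' hw
          simpa using this
        exact iff_of_true hA hB
  · -- ¬ dsEqv [] [1]
    intro h
    have hw : ∀ i : ℕ, -(k:ℤ) ≤ (fun _ : ℕ => (-1:ℤ)) i ∧ (fun _ : ℕ => (-1:ℤ)) i ≤ k := by
      intro i; constructor <;> simp <;> omega
    have heq : dsInfZ l (fun _ : ℕ => (-1:ℤ)) = -1 + l * dsInfZ l (fun _ : ℕ => (-1:ℤ)) := by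
      have := ds_shift (k := k) h0 h1 hw
      simpa using this
    have hA : dsInfZ l (fun _ : ℕ => (-1:ℤ)) < 0 := by nlinarith
    have hB : 0 ≤ dsInfZ l (app [1] (fun _ => -1)) := by
      have := part1 0 1 le_rfl (by exact_mod_cast hk1) (fun _ => -1) hw
      simpa using this
    have hiff := h (fun _ => -1) hw
    rw [show app ([] : List ℤ) (fun _ : ℕ => (-1:ℤ)) = (fun _ : ℕ => (-1:ℤ)) from rfl] at hiff
    exact absurd (hiff.mpr hB) (not_le.mpr hA)
  · -- ¬ dsEqv [] [-1]
    intro h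
    have hw : ∀ i : ℕ, -(k:ℤ) ≤ (fun _ : ℕ => (1:ℤ)) i ∧ (fun _ : ℕ => (1:ℤ)) i ≤ k := by
      intro i; constructor <;> simp <;> omega
    have heq : dsInfZ l (fun _ : ℕ => (1:ℤ)) = 1 + l * dsInfZ l (fun _ : ℕ => (1:ℤ)) := by
      have := ds_shift (k := k) h0 h1 hw
      simpa using this
    have hA : 0 ≤ dsInfZ l (fun _ : ℕ => (1:ℤ)) := by nlinarith
    have hB : dsInfZ l (app [-1] (fun _ => 1)) < 0 := by
      have := part2 0 (-1) le_rfl (by simp; omega) (fun _ => 1) hw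
      simpa using this
    have hiff := h (fun _ => 1) hw
    rw [show app ([] : List ℤ) (fun _ : ℕ => (1:ℤ)) = (fun _ : ℕ => (1:ℤ)) from rfl] at hiff
    exact absurd (hiff.mp hA) (not_le.mpr hB)
  · -- ¬ dsEqv [1] [-1]
    intro h
    have hw : ∀ i : ℕ, -(k:ℤ) ≤ (fun _ : ℕ => (0:ℤ)) i ∧ (fun _ : ℕ => (0:ℤ)) i ≤ k := by
      intro i; constructor <;> simp
    have hA : 0 ≤ dsInfZ l (app [1] (fun _ => 0)) := by
      have := part1 0 1 le_rfl (by exact_mod_cast hk1) (fun _ => 0) hw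
      simpa using this
    have hB : dsInfZ l (app [-1] (fun _ => 0)) < 0 := by
      have := part2 0 (-1) le_rfl (by simp; omega) (fun _ => 0) hw
      simpa using this
    exact absurd ((h (fun _ => 0) hw).mp hA) (not_le.mpr hB)
end
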